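/- arXiv:0804.3572 — 6 statements merged into one kernel-verified Lean document; each statement's English description precedes it below -/
import Mathlib

section
/- Let x_k(τ), y_k(τ) (k ∈ ℤ, or k ∈ ℕ with suitable boundary conventions) be differentiable functions satisfying the complexified discrete nonlinear Schrödinger system: ∂_τ x_k = x_{k+1} - 2x_k + x_{k-1} - x_k y_k (x_{k+1} + x_{k-1}) and ∂_τ y_k = -y_{k+1} + 2y_k - y_{k-1} + x_k y_k (y_{k+1} + y_{k-1}). Define, for fixed z ≠ 0, the matrices 𝓛_k := [[z, x_{k+1}],[z y_{k+1}, 1]] and 𝓜_k := [[z^{-1} - 1 - x_{k+1} y_k, x_{k+1} - z^{-1} x_k],[z y_k - y_{k+1}, x_k y_{k+1} + 1 - z]]. Then the semidiscrete zero-curvature equation ∂_τ 𝓛_k = 𝓜_{k+1} 𝓛_k - 𝓛_k 𝓜_k holds for every k and every z ≠ 0. Conversely, if the zero-curvature equation holds for all z ≠ 0, then the dNLS system holds. -/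
/-- The Ablowitz–Ladik Lax matrix `𝓛_k = [[z, x_{k+1}],[z y_{k+1}, 1]]`. -/
noncomputable def ALLax (x y : ℤ → ℝ → ℂ) (k : ℤ) (τ : ℝ) (z : ℂ) :
    Matrix (Fin 2) (Fin 2) ℂ :=
  !![z, x (k + 1) τ; z * y (k + 1) τ, 1]

/-- The dNLS zero-curvature matrix
`𝓜_k = [[z⁻¹ - 1 - x_{k+1} y_k, x_{k+1} - z⁻¹ x_k],[z y_k - y_{k+1}, x_k y_{k+1} + 1 - z]]`. -/
noncomputable def ALM (x y : ℤ → ℝ → ℂ) (k : ℤ) (τ : ℝ) (z : ℂ) :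
    Matrix (Fin 2) (Fin 2) ℂ :=
  !![z⁻¹ - 1 - x (k + 1) τ * y k τ, x (k + 1) τ - z⁻¹ * x k τ;
     z * y k τ - y (k + 1) τ, x k τ * y (k + 1) τ + 1 - z]

lemma dNLS_key (x y x' y' : ℤ → ℝ → ℂ) (k : ℤ) (τ : ℝ) (z : ℂ) (hz : z ≠ 0) :
    (!![0, x' (k + 1) τ; z * y' (k + 1) τ, 0] : Matrix (Fin 2) (Fin 2) ℂ)
          = ALM x y (k + 1) τ z * ALLax x y k τ z - ALLax x y k τ z * ALM x y k τ z
      ↔ (x' (k + 1) τ = x (k + 1 + 1) τ - 2 * x (k + 1) τ + x k τ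
              - x (k + 1) τ * y (k + 1) τ * (x (k + 1 + 1) τ + x k τ) ∧
          y' (k + 1) τ = -y (k + 1 + 1) τ + 2 * y (k + 1) τ - y k τ
              + x (k + 1) τ * y (k + 1) τ * (y (k + 1 + 1) τ + y k τ)) := by
  rw [ALM, ALLax, ALM, ← Matrix.ext_iff]
  simp [Fin.forall_fin_two, Matrix.sub_apply, Matrix.mul_apply, Fin.sum_univ_two]
  constructor
  · rintro ⟨⟨-, h1⟩, h2, -⟩
    refine ⟨by rw [h1]; field_simp; ring, ?_⟩
    refine mul_left_cancel₀ hz ?_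
    rw [h2]; field_simp; ring
  · rintro ⟨h1, h2⟩
    refine ⟨⟨by field_simp; ring, by rw [h1]; field_simp; ring⟩,
      ⟨by rw [h2]; field_simp; ring, by field_simp; ring⟩⟩

/-- The semidiscrete zero-curvature equation `∂_τ 𝓛_k = 𝓜_{k+1} 𝓛_k - 𝓛_k 𝓜_k`
(for all `k` and all `z ≠ 0`) is equivalent to the complexified discrete nonlinear
Schrödinger system. -/
theorem dNLS_zero_curvature (x y x' y' : ℤ → ℝ → ℂ)
    (hx : ∀ k τ, HasDerivAt (fun t => x k t) (x' k τ) τ)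
    (hy : ∀ k τ, HasDerivAt (fun t => y k t) (y' k τ) τ) :
    (∀ (k : ℤ) (τ : ℝ) (z : ℂ), z ≠ 0 →
        (!![0, x' (k + 1) τ; z * y' (k + 1) τ, 0] : Matrix (Fin 2) (Fin 2) ℂ)
          = ALM x y (k + 1) τ z * ALLax x y k τ z - ALLax x y k τ z * ALM x y k τ z)
      ↔ (∀ (k : ℤ) (τ : ℝ),
          x' k τ = x (k + 1) τ - 2 * x k τ + x (k - 1) τ
              - x k τ * y k τ * (x (k + 1) τ + x (k - 1) τ) ∧
          y' k τ = -y (k + 1) τ + 2 * y k τ - y (k - 1) τ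
              + x k τ * y k τ * (y (k + 1) τ + y (k - 1) τ)) := by
  have key := dNLS_key x y x' y'
  constructor
  · intro h k τ
    have := (key (k - 1) τ 1 one_ne_zero).mp (h (k - 1) τ 1 one_ne_zero)
    simpa using this
  · intro h k τ z hz
    refine (key k τ z hz).mpr ?_
    have := h (k + 1) τ
    simpa using this
end

section
/- In the matrix biorthogonal polynomial setting, the reflection coefficients and normalization matrices satisfy the intertwining relations x^l_N h^r_N = h^l_N x^r_N and y^r_N h^l_N = h^r_N y^l_N. -/
open scoped BigOperators
open Matrix Polynomial

/-- Left pairing: `⟨P,Q⟩_l` is the coefficient of `z^0` in `P(z) γ(z) Q(z⁻¹)ᵀ`. -/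
noncomputable def pairingL {n : ℕ} (γ : ℤ → Matrix (Fin n) (Fin n) ℂ)
    (P Q : Polynomial (Matrix (Fin n) (Fin n) ℂ)) : Matrix (Fin n) (Fin n) ℂ :=
  P.sum fun i A => Q.sum fun j B => A * γ ((j : ℤ) - (i : ℤ)) * Bᵀ

/-- Right pairing: `⟨P,Q⟩_r` is the coefficient of `z^0` in `P(z⁻¹)ᵀ γ(z) Q(z)`. -/
noncomputable def pairingR {n : ℕ} (γ : ℤ → Matrix (Fin n) (Fin n) ℂ)
    (P Q : Polynomial (Matrix (Fin n) (Fin n) ℂ)) : Matrix (Fin n) (Fin n) ℂ :=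
  P.sum fun i A => Q.sum fun j B => Aᵀ * γ ((i : ℤ) - (j : ℤ)) * B

namespace ReflAux

variable {n : ℕ}

/-- Transpose all coefficients of a matrix polynomial. -/
noncomputable def tpoly (P : Polynomial (Matrix (Fin n) (Fin n) ℂ)) :
    Polynomial (Matrix (Fin n) (Fin n) ℂ) :=
  ⟨AddMonoidAlgebra.ofCoeff (P.toFinsupp.coeff.mapRange Matrix.transpose rfl)⟩

@[simp] lemma coeff_tpoly (P : Polynomial (Matrix (Fin n) (Fin n) ℂ)) (i : ℕ) :
    (tpoly P).coeff i = (P.coeff i)ᵀ := rfl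

/-- Reversed (degree `N`) and transposed polynomial. -/
noncomputable def tp (N : ℕ) (P : Polynomial (Matrix (Fin n) (Fin n) ℂ)) :
    Polynomial (Matrix (Fin n) (Fin n) ℂ) :=
  tpoly (Polynomial.reflect N P)

lemma coeff_tp_of_le {N j : ℕ} (h : j ≤ N) (P : Polynomial (Matrix (Fin n) (Fin n) ℂ)) :
    (tp N P).coeff j = (P.coeff (N - j))ᵀ := by
  simp [tp, Polynomial.coeff_reflect, Polynomial.revAt_le h]

lemma natDegree_tp_le {N : ℕ} {P : Polynomial (Matrix (Fin n) (Fin n) ℂ)}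
    (hP : P.natDegree ≤ N) : (tp N P).natDegree ≤ N := by
  rw [natDegree_le_iff_coeff_eq_zero]
  intro i hi
  have h1 : Polynomial.revAt N i = i := Polynomial.revAt_eq_self_of_lt hi
  simp [tp, Polynomial.coeff_reflect, h1,
    natDegree_le_iff_coeff_eq_zero.mp hP i hi]

/-- `pairingL` as an explicit double sum over `range m`. -/
noncomputable def pl (γ : ℤ → Matrix (Fin n) (Fin n) ℂ) (m : ℕ)
    (P Q : Polynomial (Matrix (Fin n) (Fin n) ℂ)) : Matrix (Fin n) (Fin n) ℂ :=
  ∑ i ∈ Finset.range m, ∑ j ∈ Finset.range m,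
    P.coeff i * γ ((j : ℤ) - (i : ℤ)) * (Q.coeff j)ᵀ

/-- `pairingR` as an explicit double sum over `range m`. -/
noncomputable def pr (γ : ℤ → Matrix (Fin n) (Fin n) ℂ) (m : ℕ)
    (P Q : Polynomial (Matrix (Fin n) (Fin n) ℂ)) : Matrix (Fin n) (Fin n) ℂ :=
  ∑ i ∈ Finset.range m, ∑ j ∈ Finset.range m,
    (P.coeff i)ᵀ * γ ((i : ℤ) - (j : ℤ)) * Q.coeff j

lemma pairingL_eq_pl (γ : ℤ → Matrix (Fin n) (Fin n) ℂ) {m : ℕ}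
    {P Q : Polynomial (Matrix (Fin n) (Fin n) ℂ)}
    (hP : P.natDegree < m) (hQ : Q.natDegree < m) :
    pairingL γ P Q = pl γ m P Q := by
  unfold pairingL pl
  rw [Polynomial.sum_over_range' P (fun i => by simp [Polynomial.sum]) m hP]
  exact Finset.sum_congr rfl fun i _ =>
    Polynomial.sum_over_range' Q (fun j => by simp) m hQ

lemma pairingR_eq_pr (γ : ℤ → Matrix (Fin n) (Fin n) ℂ) {m : ℕ}
    {P Q : Polynomial (Matrix (Fin n) (Fin n) ℂ)}
    (hP : P.natDegree < m) (hQ : Q.natDegree < m) :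
    pairingR γ P Q = pr γ m P Q := by
  unfold pairingR pr
  rw [Polynomial.sum_over_range' P (fun i => by simp [Polynomial.sum]) m hP]
  exact Finset.sum_congr rfl fun i _ =>
    Polynomial.sum_over_range' Q (fun j => by simp) m hQ

/-- Reindexing identity: `⟨P, Q̃⟩_l = ⟨P̃, Q⟩_r`. -/
lemma pl_tp_eq_pr_tp (γ : ℤ → Matrix (Fin n) (Fin n) ℂ) (N : ℕ)
    (P Q : Polynomial (Matrix (Fin n) (Fin n) ℂ)) :
    pl γ (N+1) P (tp N Q) = pr γ (N+1) (tp N P) Q := by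
  have hL : pl γ (N+1) P (tp N Q) = ∑ i ∈ Finset.range (N+1), ∑ j ∈ Finset.range (N+1),
      P.coeff i * γ ((N : ℤ) - i - j) * Q.coeff j := by
    unfold pl
    refine Finset.sum_congr rfl fun i _ => ?_
    rw [← Finset.sum_range_reflect]
    refine Finset.sum_congr rfl fun j hj => ?_
    have hj' : j ≤ N := Nat.lt_succ_iff.mp (Finset.mem_range.mp hj)
    have h1 : N + 1 - 1 - j = N - j := by omega
    rw [h1, coeff_tp_of_le (Nat.sub_le N j), Matrix.transpose_transpose]
    have h2 : N - (N - j) = j := by omega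
    have h3 : ((N - j : ℕ) : ℤ) - i = (N : ℤ) - i - j := by omega
    rw [h2, h3]
  have hR : pr γ (N+1) (tp N P) Q = ∑ i ∈ Finset.range (N+1), ∑ j ∈ Finset.range (N+1),
      P.coeff i * γ ((N : ℤ) - i - j) * Q.coeff j := by
    unfold pr
    rw [← Finset.sum_range_reflect]
    refine Finset.sum_congr rfl fun i hi => ?_
    refine Finset.sum_congr rfl fun j hj => ?_
    have hi' : i ≤ N := Nat.lt_succ_iff.mp (Finset.mem_range.mp hi)
    have h1 : N + 1 - 1 - i = N - i := by omega
    rw [h1, coeff_tp_of_le (Nat.sub_le N i), Matrix.transpose_transpose]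
    have h2 : N - (N - i) = i := by omega
    have h3 : ((N - i : ℕ) : ℤ) - j = (N : ℤ) - i - j := by omega
    rw [h2, h3]
  rw [hL, hR]

/-- Reindexing identity: `⟨P̃, Q⟩_l = ⟨P, Q̃⟩_r`. -/
lemma pl_tp_eq_pr_tp' (γ : ℤ → Matrix (Fin n) (Fin n) ℂ) (N : ℕ)
    (P Q : Polynomial (Matrix (Fin n) (Fin n) ℂ)) :
    pl γ (N+1) (tp N P) Q = pr γ (N+1) P (tp N Q) := by
  have hL : pl γ (N+1) (tp N P) Q = ∑ i ∈ Finset.range (N+1), ∑ j ∈ Finset.range (N+1),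
      (P.coeff i)ᵀ * γ ((i : ℤ) + j - N) * (Q.coeff j)ᵀ := by
    unfold pl
    rw [← Finset.sum_range_reflect]
    refine Finset.sum_congr rfl fun i hi => ?_
    refine Finset.sum_congr rfl fun j hj => ?_
    have hi' : i ≤ N := Nat.lt_succ_iff.mp (Finset.mem_range.mp hi)
    have h1 : N + 1 - 1 - i = N - i := by omega
    rw [h1, coeff_tp_of_le (Nat.sub_le N i)]
    have h2 : N - (N - i) = i := by omega
    have h3 : (j : ℤ) - ((N - i : ℕ) : ℤ) = (i : ℤ) + j - N := by omega
    rw [h2, h3]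
  have hR : pr γ (N+1) P (tp N Q) = ∑ i ∈ Finset.range (N+1), ∑ j ∈ Finset.range (N+1),
      (P.coeff i)ᵀ * γ ((i : ℤ) + j - N) * (Q.coeff j)ᵀ := by
    unfold pr
    refine Finset.sum_congr rfl fun i _ => ?_
    rw [← Finset.sum_range_reflect]
    refine Finset.sum_congr rfl fun j hj => ?_
    have hj' : j ≤ N := Nat.lt_succ_iff.mp (Finset.mem_range.mp hj)
    have h1 : N + 1 - 1 - j = N - j := by omega
    rw [h1, coeff_tp_of_le (Nat.sub_le N j)]
    have h2 : N - (N - j) = j := by omega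
    have h3 : (i : ℤ) - ((N - j : ℕ) : ℤ) = (i : ℤ) + j - N := by omega
    rw [h2, h3]
  rw [hL, hR]

section Bilinear

variable (γ : ℤ → Matrix (Fin n) (Fin n) ℂ) (m : ℕ)
variable (P Q Q₁ Q₂ : Polynomial (Matrix (Fin n) (Fin n) ℂ))
variable (A : Matrix (Fin n) (Fin n) ℂ)

lemma pl_add_right : pl γ m P (Q₁ + Q₂) = pl γ m P Q₁ + pl γ m P Q₂ := by
  simp [pl, Polynomial.coeff_add, Matrix.transpose_add, mul_add, Finset.sum_add_distrib]

lemma pl_add_left : pl γ m (Q₁ + Q₂) P = pl γ m Q₁ P + pl γ m Q₂ P := by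
  simp [pl, Polynomial.coeff_add, add_mul, Finset.sum_add_distrib]

lemma pr_add_right : pr γ m P (Q₁ + Q₂) = pr γ m P Q₁ + pr γ m P Q₂ := by
  simp [pr, Polynomial.coeff_add, mul_add, Finset.sum_add_distrib]

lemma pr_add_left : pr γ m (Q₁ + Q₂) P = pr γ m Q₁ P + pr γ m Q₂ P := by
  simp [pr, Polynomial.coeff_add, Matrix.transpose_add, add_mul, Finset.sum_add_distrib]

lemma pl_sum_right {ι : Type*} (s : Finset ι)
    (f : ι → Polynomial (Matrix (Fin n) (Fin n) ℂ)) :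
    pl γ m P (∑ k ∈ s, f k) = ∑ k ∈ s, pl γ m P (f k) :=
  map_sum (AddMonoidHom.mk' (pl γ m P) (fun a b => pl_add_right γ m P a b)) f s

lemma pl_sum_left {ι : Type*} (s : Finset ι)
    (f : ι → Polynomial (Matrix (Fin n) (Fin n) ℂ)) :
    pl γ m (∑ k ∈ s, f k) P = ∑ k ∈ s, pl γ m (f k) P :=
  map_sum (AddMonoidHom.mk' (fun R => pl γ m R P) (fun a b => pl_add_left γ m P a b)) f s

lemma pr_sum_right {ι : Type*} (s : Finset ι)
    (f : ι → Polynomial (Matrix (Fin n) (Fin n) ℂ)) :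
    pr γ m P (∑ k ∈ s, f k) = ∑ k ∈ s, pr γ m P (f k) :=
  map_sum (AddMonoidHom.mk' (pr γ m P) (fun a b => pr_add_right γ m P a b)) f s

lemma pr_sum_left {ι : Type*} (s : Finset ι)
    (f : ι → Polynomial (Matrix (Fin n) (Fin n) ℂ)) :
    pr γ m (∑ k ∈ s, f k) P = ∑ k ∈ s, pr γ m (f k) P :=
  map_sum (AddMonoidHom.mk' (fun R => pr γ m R P) (fun a b => pr_add_left γ m P a b)) f s

lemma pl_C_mul_right : pl γ m P (Polynomial.C A * Q) = pl γ m P Q * Aᵀ := by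
  simp [pl, Polynomial.coeff_C_mul, Matrix.transpose_mul, Finset.sum_mul, mul_assoc]

lemma pl_C_mul_left : pl γ m (Polynomial.C A * Q) P = A * pl γ m Q P := by
  simp [pl, Polynomial.coeff_C_mul, Finset.mul_sum, mul_assoc]

lemma pr_mul_C_left : pr γ m (Q * Polynomial.C A) P = Aᵀ * pr γ m Q P := by
  simp [pr, Polynomial.coeff_mul_C, Matrix.transpose_mul, Finset.mul_sum, mul_assoc]

lemma pr_mul_C_right : pr γ m P (Q * Polynomial.C A) = pr γ m P Q * A := by
  simp [pr, Polynomial.coeff_mul_C, Finset.sum_mul, mul_assoc]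

end Bilinear

/-- Expansion of a polynomial of degree ≤ N in a monic family, constants on the left. -/
lemma expand_left (B : ℕ → Polynomial (Matrix (Fin n) (Fin n) ℂ))
    (hB : ∀ k, (B k).Monic ∧ (B k).natDegree = k) :
    ∀ (N : ℕ) (Q : Polynomial (Matrix (Fin n) (Fin n) ℂ)), Q.natDegree ≤ N →
      ∃ c : ℕ → Matrix (Fin n) (Fin n) ℂ, c N = Q.coeff N ∧
        Q = ∑ k ∈ Finset.range (N+1), Polynomial.C (c k) * B k := by
  intro N
  induction N with
  | zero =>
    intro Q hQ
    refine ⟨fun _ => Q.coeff 0, rfl, ?_⟩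
    have hB0 : B 0 = 1 := ((hB 0).1.natDegree_eq_zero).mp (hB 0).2
    rw [Finset.sum_range_one, hB0, mul_one]
    exact Polynomial.eq_C_of_natDegree_le_zero hQ
  | succ N ih =>
    intro Q hQ
    have hlead : (B (N+1)).coeff (N+1) = 1 := by
      have := (hB (N+1)).1.coeff_natDegree
      rwa [(hB (N+1)).2] at this
    have hdeg : (Q - Polynomial.C (Q.coeff (N+1)) * B (N+1)).natDegree ≤ N := by
      rw [natDegree_le_iff_coeff_eq_zero]
      intro i hi
      rw [Polynomial.coeff_sub, Polynomial.coeff_C_mul]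
      rcases eq_or_lt_of_le (Nat.succ_le_of_lt hi) with h | h
      · rw [← h, hlead, mul_one, sub_self]
      · rw [natDegree_le_iff_coeff_eq_zero.mp hQ i h,
          natDegree_le_iff_coeff_eq_zero.mp (le_of_eq (hB (N+1)).2) i h,
          mul_zero, sub_zero]
    obtain ⟨c, hcN, hsum⟩ := ih _ hdeg
    refine ⟨fun k => if k = N+1 then Q.coeff (N+1) else c k, by simp, ?_⟩
    rw [Finset.sum_range_succ]
    simp only [if_pos rfl]
    have h1 : ∑ k ∈ Finset.range (N+1),
        Polynomial.C (if k = N+1 then Q.coeff (N+1) else c k) * B k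
        = ∑ k ∈ Finset.range (N+1), Polynomial.C (c k) * B k := by
      refine Finset.sum_congr rfl fun k hk => ?_
      rw [if_neg (by have := Finset.mem_range.mp hk; omega)]
    rw [h1, ← hsum]
    exact (sub_add_cancel _ _).symm

/-- Expansion of a polynomial of degree ≤ N in a monic family, constants on the right. -/
lemma expand_right (B : ℕ → Polynomial (Matrix (Fin n) (Fin n) ℂ))
    (hB : ∀ k, (B k).Monic ∧ (B k).natDegree = k) :
    ∀ (N : ℕ) (Q : Polynomial (Matrix (Fin n) (Fin n) ℂ)), Q.natDegree ≤ N →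
      ∃ c : ℕ → Matrix (Fin n) (Fin n) ℂ, c N = Q.coeff N ∧
        Q = ∑ k ∈ Finset.range (N+1), B k * Polynomial.C (c k) := by
  intro N
  induction N with
  | zero =>
    intro Q hQ
    refine ⟨fun _ => Q.coeff 0, rfl, ?_⟩
    have hB0 : B 0 = 1 := ((hB 0).1.natDegree_eq_zero).mp (hB 0).2
    rw [Finset.sum_range_one, hB0, one_mul]
    exact Polynomial.eq_C_of_natDegree_le_zero hQ
  | succ N ih =>
    intro Q hQ
    have hlead : (B (N+1)).coeff (N+1) = 1 := by
      have := (hB (N+1)).1.coeff_natDegree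
      rwa [(hB (N+1)).2] at this
    have hdeg : (Q - B (N+1) * Polynomial.C (Q.coeff (N+1))).natDegree ≤ N := by
      rw [natDegree_le_iff_coeff_eq_zero]
      intro i hi
      rw [Polynomial.coeff_sub, Polynomial.coeff_mul_C]
      rcases eq_or_lt_of_le (Nat.succ_le_of_lt hi) with h | h
      · rw [← h, hlead, one_mul, sub_self]
      · rw [natDegree_le_iff_coeff_eq_zero.mp hQ i h,
          natDegree_le_iff_coeff_eq_zero.mp (le_of_eq (hB (N+1)).2) i h,
          zero_mul, sub_zero]
    obtain ⟨c, hcN, hsum⟩ := ih _ hdeg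
    refine ⟨fun k => if k = N+1 then Q.coeff (N+1) else c k, by simp, ?_⟩
    rw [Finset.sum_range_succ]
    simp only [if_pos rfl]
    have h1 : ∑ k ∈ Finset.range (N+1),
        B k * Polynomial.C (if k = N+1 then Q.coeff (N+1) else c k)
        = ∑ k ∈ Finset.range (N+1), B k * Polynomial.C (c k) := by
      refine Finset.sum_congr rfl fun k hk => ?_
      rw [if_neg (by have := Finset.mem_range.mp hk; omega)]
    rw [h1, ← hsum]
    exact (sub_add_cancel _ _).symm

end ReflAux

open ReflAux

/-- Intertwining relations for reflection coefficients and normalization matrices: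
`xˡ_N hʳ_N = hˡ_N xʳ_N` and `yʳ_N hˡ_N = hʳ_N yˡ_N`. -/
theorem reflection_intertwining {n : ℕ} (γ : ℤ → Matrix (Fin n) (Fin n) ℂ)
    (P1l P2l P1r P2r : ℕ → Polynomial (Matrix (Fin n) (Fin n) ℂ))
    (hl hr : ℕ → Matrix (Fin n) (Fin n) ℂ)
    (hmon : ∀ N, (P1l N).Monic ∧ (P1l N).natDegree = N ∧
      (P2l N).Monic ∧ (P2l N).natDegree = N ∧
      (P1r N).Monic ∧ (P1r N).natDegree = N ∧
      (P2r N).Monic ∧ (P2r N).natDegree = N)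
    (hbl : ∀ N M, pairingL γ (P1l N) (P2l M) = if N = M then hl N else 0)
    (hbr : ∀ N M, pairingR γ (P2r N) (P1r M) = if N = M then hr N else 0)
    (hunit : ∀ N, IsUnit (hl N) ∧ IsUnit (hr N)) (N : ℕ) :
    (P1l N).eval 0 * hr N = hl N * (P1r N).eval 0 ∧
      ((P2r N).eval 0)ᵀ * hl N = hr N * ((P2l N).eval 0)ᵀ := by
  have hm1l := fun k => (hmon k).1
  have hd1l := fun k => (hmon k).2.1
  have hm2l := fun k => (hmon k).2.2.1
  have hd2l := fun k => (hmon k).2.2.2.1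
  have hm1r := fun k => (hmon k).2.2.2.2.1
  have hd1r := fun k => (hmon k).2.2.2.2.2.1
  have hm2r := fun k => (hmon k).2.2.2.2.2.2.1
  have hd2r := fun k => (hmon k).2.2.2.2.2.2.2
  constructor
  · -- first relation : xl * hr = hl * xr
    -- evaluate  pl γ (N+1) (P1l N) (tp N (P1r N))  two ways
    obtain ⟨c, hcN, hc⟩ := expand_left P2l (fun k => ⟨hm2l k, hd2l k⟩) N
      (tp N (P1r N)) (natDegree_tp_le (le_of_eq (hd1r N)))
    have A1 : pl γ (N+1) (P1l N) (tp N (P1r N)) = hl N * (P1r N).coeff 0 := by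
      rw [hc, pl_sum_right]
      have : ∀ k ∈ Finset.range (N+1),
          pl γ (N+1) (P1l N) (Polynomial.C (c k) * P2l k)
            = (if N = k then hl N else 0) * (c k)ᵀ := by
        intro k hk
        rw [pl_C_mul_right, ← pairingL_eq_pl γ (by rw [hd1l N]; omega)
          (by rw [hd2l k]; have := Finset.mem_range.mp hk; omega), hbl N k]
      rw [Finset.sum_congr rfl this, Finset.sum_eq_single N
        (fun k _ hk => by rw [if_neg (Ne.symm hk), zero_mul])
        (fun h => absurd (Finset.self_mem_range_succ N) h)]
      rw [if_pos rfl, hcN, coeff_tp_of_le (le_refl N), Nat.sub_self,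
        Matrix.transpose_transpose]
    obtain ⟨d, hdN, hd⟩ := expand_right P2r (fun k => ⟨hm2r k, hd2r k⟩) N
      (tp N (P1l N)) (natDegree_tp_le (le_of_eq (hd1l N)))
    have A2 : pr γ (N+1) (tp N (P1l N)) (P1r N) = (P1l N).coeff 0 * hr N := by
      rw [hd, pr_sum_left]
      have : ∀ k ∈ Finset.range (N+1),
          pr γ (N+1) (P2r k * Polynomial.C (d k)) (P1r N)
            = (d k)ᵀ * (if k = N then hr k else 0) := by
        intro k hk
        rw [pr_mul_C_left, ← pairingR_eq_pr γ
          (by rw [hd2r k]; have := Finset.mem_range.mp hk; omega)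
          (by rw [hd1r N]; omega), hbr k N]
      rw [Finset.sum_congr rfl this, Finset.sum_eq_single N
        (fun k _ hk => by rw [if_neg hk, mul_zero])
        (fun h => absurd (Finset.self_mem_range_succ N) h)]
      rw [if_pos rfl, hdN, coeff_tp_of_le (le_refl N), Nat.sub_self,
        Matrix.transpose_transpose]
    have := pl_tp_eq_pr_tp γ N (P1l N) (P1r N)
    rw [A1, A2] at this
    rw [← Polynomial.coeff_zero_eq_eval_zero, ← Polynomial.coeff_zero_eq_eval_zero]
    exact this.symm
  · -- second relation : yr * hl = hr * yl
    obtain ⟨c, hcN, hc⟩ := expand_left P1l (fun k => ⟨hm1l k, hd1l k⟩) N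
      (tp N (P2r N)) (natDegree_tp_le (le_of_eq (hd2r N)))
    have B2 : pl γ (N+1) (tp N (P2r N)) (P2l N) = ((P2r N).coeff 0)ᵀ * hl N := by
      rw [hc, pl_sum_left]
      have : ∀ k ∈ Finset.range (N+1),
          pl γ (N+1) (Polynomial.C (c k) * P1l k) (P2l N)
            = c k * (if k = N then hl k else 0) := by
        intro k hk
        rw [pl_C_mul_left, ← pairingL_eq_pl γ
          (by rw [hd1l k]; have := Finset.mem_range.mp hk; omega)
          (by rw [hd2l N]; omega), hbl k N]
      rw [Finset.sum_congr rfl this, Finset.sum_eq_single N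
        (fun k _ hk => by rw [if_neg hk, mul_zero])
        (fun h => absurd (Finset.self_mem_range_succ N) h)]
      rw [if_pos rfl, hcN, coeff_tp_of_le (le_refl N), Nat.sub_self]
    obtain ⟨e, heN, he⟩ := expand_right P1r (fun k => ⟨hm1r k, hd1r k⟩) N
      (tp N (P2l N)) (natDegree_tp_le (le_of_eq (hd2l N)))
    have B1 : pr γ (N+1) (P2r N) (tp N (P2l N)) = hr N * ((P2l N).coeff 0)ᵀ := by
      rw [he, pr_sum_right]
      have : ∀ k ∈ Finset.range (N+1),
          pr γ (N+1) (P2r N) (P1r k * Polynomial.C (e k))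
            = (if N = k then hr N else 0) * e k := by
        intro k hk
        rw [pr_mul_C_right, ← pairingR_eq_pr γ (by rw [hd2r N]; omega)
          (by rw [hd1r k]; have := Finset.mem_range.mp hk; omega), hbr N k]
      rw [Finset.sum_congr rfl this, Finset.sum_eq_single N
        (fun k _ hk => by rw [if_neg (Ne.symm hk), zero_mul])
        (fun h => absurd (Finset.self_mem_range_succ N) h)]
      rw [if_pos rfl, heN, coeff_tp_of_le (le_refl N), Nat.sub_self]
    have := pl_tp_eq_pr_tp' γ N (P2r N) (P2l N)
    rw [B2, B1] at this
    rw [← Polynomial.coeff_zero_eq_eval_zero, ← Polynomial.coeff_zero_eq_eval_zero]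
    exact this
end

section
/- In the matrix biorthogonal polynomial setting, the ratios of normalization matrices are expressed by reflection coefficients: (h^r_N)⁻¹ h^r_{N+1} = I - y^l_{N+1} x^r_{N+1} and h^l_{N+1} (h^l_N)⁻¹ = I - x^l_{N+1} y^r_{N+1}. -/
open scoped BigOperators
open Matrix Polynomial

namespace MBPAux
abbrev Mat (n : ℕ) := Matrix (Fin n) (Fin n) ℂ
variable {n : ℕ}
lemma psum_zero (p : Polynomial (Mat n)) : (p.sum fun _ _ => (0 : Mat n)) = 0 := by
  simp [Polynomial.sum_def]
lemma pairingR_rep (γ : ℤ → Mat n) (P Q : Polynomial (Mat n)) {a b : ℕ}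
    (ha : P.natDegree < a) (hb : Q.natDegree < b) :
    pairingR γ P Q = ∑ i ∈ Finset.range a, ∑ j ∈ Finset.range b,
      (P.coeff i)ᵀ * γ ((i : ℤ) - (j : ℤ)) * Q.coeff j := by
  unfold pairingR
  rw [Polynomial.sum_over_range' P (fun i => by
      simp only [Matrix.transpose_zero, zero_mul]; exact psum_zero Q) a ha]
  refine Finset.sum_congr rfl fun i _ => ?_
  rw [Polynomial.sum_over_range' Q (fun j => by rw [mul_zero]) b hb]
lemma pairingL_rep (γ : ℤ → Mat n) (P Q : Polynomial (Mat n)) {a b : ℕ}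
    (ha : P.natDegree < a) (hb : Q.natDegree < b) :
    pairingL γ P Q = ∑ i ∈ Finset.range a, ∑ j ∈ Finset.range b,
      P.coeff i * γ ((j : ℤ) - (i : ℤ)) * (Q.coeff j)ᵀ := by
  unfold pairingL
  rw [Polynomial.sum_over_range' P (fun i => by
      simp only [zero_mul]; exact psum_zero Q) a ha]
  refine Finset.sum_congr rfl fun i _ => ?_
  rw [Polynomial.sum_over_range' Q (fun j => by rw [Matrix.transpose_zero, mul_zero]) b hb]

-- additivity in the second argument
lemma pR_add_right (γ : ℤ → Mat n) (P Q₁ Q₂ : Polynomial (Mat n)) :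
    pairingR γ P (Q₁ + Q₂) = pairingR γ P Q₁ + pairingR γ P Q₂ := by
  have hb : (Q₁ + Q₂).natDegree < (Q₁.natDegree ⊔ Q₂.natDegree) + 1 :=
    Nat.lt_succ_of_le (Polynomial.natDegree_add_le _ _)
  rw [pairingR_rep γ P (Q₁ + Q₂) (Nat.lt_succ_self _) hb,
    pairingR_rep γ P Q₁ (Nat.lt_succ_self _)
      (Nat.lt_succ_of_le (le_max_left _ _)),
    pairingR_rep γ P Q₂ (Nat.lt_succ_self _)
      (Nat.lt_succ_of_le (le_max_right _ _)), ← Finset.sum_add_distrib]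
  refine Finset.sum_congr rfl fun i _ => ?_
  rw [← Finset.sum_add_distrib]
  refine Finset.sum_congr rfl fun j _ => ?_
  rw [Polynomial.coeff_add, mul_add]

lemma pR_sub_right (γ : ℤ → Mat n) (P Q₁ Q₂ : Polynomial (Mat n)) :
    pairingR γ P (Q₁ - Q₂) = pairingR γ P Q₁ - pairingR γ P Q₂ := by
  have hb : (Q₁ - Q₂).natDegree < (Q₁.natDegree ⊔ Q₂.natDegree) + 1 :=
    Nat.lt_succ_of_le (Polynomial.natDegree_sub_le _ _)
  rw [pairingR_rep γ P (Q₁ - Q₂) (Nat.lt_succ_self _) hb,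
    pairingR_rep γ P Q₁ (Nat.lt_succ_self _)
      (Nat.lt_succ_of_le (le_max_left _ _)),
    pairingR_rep γ P Q₂ (Nat.lt_succ_self _)
      (Nat.lt_succ_of_le (le_max_right _ _)), ← Finset.sum_sub_distrib]
  refine Finset.sum_congr rfl fun i _ => ?_
  rw [← Finset.sum_sub_distrib]
  refine Finset.sum_congr rfl fun j _ => ?_
  rw [Polynomial.coeff_sub, mul_sub]

lemma pR_add_left (γ : ℤ → Mat n) (P₁ P₂ Q : Polynomial (Mat n)) :
    pairingR γ (P₁ + P₂) Q = pairingR γ P₁ Q + pairingR γ P₂ Q := by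
  have ha : (P₁ + P₂).natDegree < (P₁.natDegree ⊔ P₂.natDegree) + 1 :=
    Nat.lt_succ_of_le (Polynomial.natDegree_add_le _ _)
  rw [pairingR_rep γ (P₁ + P₂) Q ha (Nat.lt_succ_self _),
    pairingR_rep γ P₁ Q (Nat.lt_succ_of_le (le_max_left _ _)) (Nat.lt_succ_self _),
    pairingR_rep γ P₂ Q (Nat.lt_succ_of_le (le_max_right _ _)) (Nat.lt_succ_self _),
    ← Finset.sum_add_distrib]
  refine Finset.sum_congr rfl fun i _ => ?_
  rw [← Finset.sum_add_distrib]
  refine Finset.sum_congr rfl fun j _ => ?_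
  rw [Polynomial.coeff_add, Matrix.transpose_add, add_mul, add_mul]

lemma pR_mulC_right (γ : ℤ → Mat n) (P Q : Polynomial (Mat n)) (A : Mat n) :
    pairingR γ P (Q * C A) = pairingR γ P Q * A := by
  have hb : (Q * C A).natDegree < Q.natDegree + 1 :=
    Nat.lt_succ_of_le ((Polynomial.natDegree_mul_le).trans (by
      simp [Polynomial.natDegree_C]))
  rw [pairingR_rep γ P (Q * C A) (Nat.lt_succ_self _) hb,
    pairingR_rep γ P Q (Nat.lt_succ_self _) (Nat.lt_succ_self _),
    Finset.sum_mul]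
  refine Finset.sum_congr rfl fun i _ => ?_
  rw [Finset.sum_mul]
  refine Finset.sum_congr rfl fun j _ => ?_
  rw [Polynomial.coeff_mul_C, ← mul_assoc]

lemma pR_mulC_left (γ : ℤ → Mat n) (P Q : Polynomial (Mat n)) (A : Mat n) :
    pairingR γ (P * C A) Q = Aᵀ * pairingR γ P Q := by
  have ha : (P * C A).natDegree < P.natDegree + 1 :=
    Nat.lt_succ_of_le ((Polynomial.natDegree_mul_le).trans (by
      simp [Polynomial.natDegree_C]))
  rw [pairingR_rep γ (P * C A) Q ha (Nat.lt_succ_self _),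
    pairingR_rep γ P Q (Nat.lt_succ_self _) (Nat.lt_succ_self _),
    Finset.mul_sum]
  refine Finset.sum_congr rfl fun i _ => ?_
  rw [Finset.mul_sum]
  refine Finset.sum_congr rfl fun j _ => ?_
  rw [Polynomial.coeff_mul_C, Matrix.transpose_mul]; simp only [mul_assoc]

lemma pR_XX (γ : ℤ → Mat n) (P Q : Polynomial (Mat n)) :
    pairingR γ (X * P) (X * Q) = pairingR γ P Q := by
  have ha : (X * P).natDegree < P.natDegree + 2 := by
    have := Polynomial.natDegree_mul_le (p := (X : Polynomial (Mat n))) (q := P)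
    have hX : (X : Polynomial (Mat n)).natDegree ≤ 1 := Polynomial.natDegree_X_le
    omega
  have hb : (X * Q).natDegree < Q.natDegree + 2 := by
    have := Polynomial.natDegree_mul_le (p := (X : Polynomial (Mat n))) (q := Q)
    have hX : (X : Polynomial (Mat n)).natDegree ≤ 1 := Polynomial.natDegree_X_le
    omega
  rw [pairingR_rep γ (X * P) (X * Q) ha hb,
    pairingR_rep γ P Q (Nat.lt_succ_self _) (Nat.lt_succ_self _)]
  rw [Finset.sum_range_succ']
  have hz : ∀ j ∈ Finset.range (Q.natDegree + 2),
      ((X * P).coeff 0)ᵀ * γ ((0 : ℕ) - (j : ℤ)) * (X * Q).coeff j = 0 := by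
    intro j _
    rw [Polynomial.mul_coeff_zero, Polynomial.coeff_X_zero, zero_mul,
      Matrix.transpose_zero, zero_mul, zero_mul]
  rw [Finset.sum_eq_zero hz, add_zero]
  refine Finset.sum_congr rfl fun i _ => ?_
  rw [Finset.sum_range_succ']
  rw [Polynomial.mul_coeff_zero, Polynomial.coeff_X_zero, zero_mul, mul_zero, add_zero]
  refine Finset.sum_congr rfl fun j _ => ?_
  rw [Polynomial.coeff_X_mul, Polynomial.coeff_X_mul]
  have hcast : ((i+1:ℕ):ℤ) - ((j+1:ℕ):ℤ) = (i:ℤ) - (j:ℤ) := by push_cast; ring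
  rw [hcast]

lemma pL_add_left (γ : ℤ → Mat n) (P₁ P₂ Q : Polynomial (Mat n)) :
    pairingL γ (P₁ + P₂) Q = pairingL γ P₁ Q + pairingL γ P₂ Q := by
  have ha : (P₁ + P₂).natDegree < (P₁.natDegree ⊔ P₂.natDegree) + 1 :=
    Nat.lt_succ_of_le (Polynomial.natDegree_add_le _ _)
  rw [pairingL_rep γ (P₁ + P₂) Q ha (Nat.lt_succ_self _),
    pairingL_rep γ P₁ Q (Nat.lt_succ_of_le (le_max_left _ _)) (Nat.lt_succ_self _),
    pairingL_rep γ P₂ Q (Nat.lt_succ_of_le (le_max_right _ _)) (Nat.lt_succ_self _),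
    ← Finset.sum_add_distrib]
  refine Finset.sum_congr rfl fun i _ => ?_
  rw [← Finset.sum_add_distrib]
  refine Finset.sum_congr rfl fun j _ => ?_
  rw [Polynomial.coeff_add, add_mul, add_mul]

lemma pL_add_right (γ : ℤ → Mat n) (P Q₁ Q₂ : Polynomial (Mat n)) :
    pairingL γ P (Q₁ + Q₂) = pairingL γ P Q₁ + pairingL γ P Q₂ := by
  have hb : (Q₁ + Q₂).natDegree < (Q₁.natDegree ⊔ Q₂.natDegree) + 1 :=
    Nat.lt_succ_of_le (Polynomial.natDegree_add_le _ _)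
  rw [pairingL_rep γ P (Q₁ + Q₂) (Nat.lt_succ_self _) hb,
    pairingL_rep γ P Q₁ (Nat.lt_succ_self _) (Nat.lt_succ_of_le (le_max_left _ _)),
    pairingL_rep γ P Q₂ (Nat.lt_succ_self _) (Nat.lt_succ_of_le (le_max_right _ _)),
    ← Finset.sum_add_distrib]
  refine Finset.sum_congr rfl fun i _ => ?_
  rw [← Finset.sum_add_distrib]
  refine Finset.sum_congr rfl fun j _ => ?_
  rw [Polynomial.coeff_add, Matrix.transpose_add, mul_add]

lemma pL_Cmul_left (γ : ℤ → Mat n) (P Q : Polynomial (Mat n)) (A : Mat n) :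
    pairingL γ (C A * P) Q = A * pairingL γ P Q := by
  have ha : (C A * P).natDegree < P.natDegree + 1 :=
    Nat.lt_succ_of_le (Polynomial.natDegree_C_mul_le _ _)
  rw [pairingL_rep γ (C A * P) Q ha (Nat.lt_succ_self _),
    pairingL_rep γ P Q (Nat.lt_succ_self _) (Nat.lt_succ_self _),
    Finset.mul_sum]
  refine Finset.sum_congr rfl fun i _ => ?_
  rw [Finset.mul_sum]
  refine Finset.sum_congr rfl fun j _ => ?_
  rw [Polynomial.coeff_C_mul]; simp only [mul_assoc]

lemma pL_Cmul_right (γ : ℤ → Mat n) (P Q : Polynomial (Mat n)) (A : Mat n) :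
    pairingL γ P (C A * Q) = pairingL γ P Q * Aᵀ := by
  have hb : (C A * Q).natDegree < Q.natDegree + 1 :=
    Nat.lt_succ_of_le (Polynomial.natDegree_C_mul_le _ _)
  rw [pairingL_rep γ P (C A * Q) (Nat.lt_succ_self _) hb,
    pairingL_rep γ P Q (Nat.lt_succ_self _) (Nat.lt_succ_self _),
    Finset.sum_mul]
  refine Finset.sum_congr rfl fun i _ => ?_
  rw [Finset.sum_mul]
  refine Finset.sum_congr rfl fun j _ => ?_
  rw [Polynomial.coeff_C_mul, Matrix.transpose_mul, ← mul_assoc]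

lemma pL_XX (γ : ℤ → Mat n) (P Q : Polynomial (Mat n)) :
    pairingL γ (X * P) (X * Q) = pairingL γ P Q := by
  have ha : (X * P).natDegree < P.natDegree + 2 := by
    have := Polynomial.natDegree_mul_le (p := (X : Polynomial (Mat n))) (q := P)
    have hX : (X : Polynomial (Mat n)).natDegree ≤ 1 := Polynomial.natDegree_X_le
    omega
  have hb : (X * Q).natDegree < Q.natDegree + 2 := by
    have := Polynomial.natDegree_mul_le (p := (X : Polynomial (Mat n))) (q := Q)
    have hX : (X : Polynomial (Mat n)).natDegree ≤ 1 := Polynomial.natDegree_X_le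
    omega
  rw [pairingL_rep γ (X * P) (X * Q) ha hb,
    pairingL_rep γ P Q (Nat.lt_succ_self _) (Nat.lt_succ_self _)]
  rw [Finset.sum_range_succ']
  have hz : ∀ j ∈ Finset.range (Q.natDegree + 2),
      (X * P).coeff 0 * γ ((j : ℤ) - (0 : ℕ)) * ((X * Q).coeff j)ᵀ = 0 := by
    intro j _
    rw [Polynomial.mul_coeff_zero, Polynomial.coeff_X_zero, zero_mul, zero_mul, zero_mul]
  rw [Finset.sum_eq_zero hz, add_zero]
  refine Finset.sum_congr rfl fun i _ => ?_
  rw [Finset.sum_range_succ']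
  rw [Polynomial.mul_coeff_zero, Polynomial.coeff_X_zero, zero_mul,
    Matrix.transpose_zero, mul_zero, add_zero]
  refine Finset.sum_congr rfl fun j _ => ?_
  rw [Polynomial.coeff_X_mul, Polynomial.coeff_X_mul]
  have hcast : ((j+1:ℕ):ℤ) - ((i+1:ℕ):ℤ) = (j:ℤ) - (i:ℤ) := by push_cast; ring
  rw [hcast]

/-- coefficient-wise transpose of a matrix polynomial -/
noncomputable def trp (P : Polynomial (Mat n)) : Polynomial (Mat n) :=
  P.sum fun i A => Polynomial.monomial i Aᵀ

lemma trp_coeff (P : Polynomial (Mat n)) (j : ℕ) : (trp P).coeff j = (P.coeff j)ᵀ := by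
  unfold trp
  rw [Polynomial.sum_def, Polynomial.finset_sum_coeff]
  simp only [Polynomial.coeff_monomial]
  by_cases hj : j ∈ P.support
  · rw [Finset.sum_eq_single j (fun b _ hb => by rw [if_neg hb]) (fun h => absurd hj h)]
    rw [if_pos rfl]
  · rw [Finset.sum_eq_zero, Polynomial.notMem_support_iff.mp hj, Matrix.transpose_zero]
    intro b hb
    rw [if_neg]
    intro hbj; exact hj (hbj ▸ hb)

lemma trp_natDegree_le (P : Polynomial (Mat n)) : (trp P).natDegree ≤ P.natDegree := by
  rw [Polynomial.natDegree_le_iff_coeff_eq_zero]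
  intro m hm
  rw [trp_coeff, Polynomial.coeff_eq_zero_of_natDegree_lt hm, Matrix.transpose_zero]

lemma trp_add (P Q : Polynomial (Mat n)) : trp (P + Q) = trp P + trp Q := by
  refine Polynomial.ext fun j => ?_
  simp [trp_coeff, Polynomial.coeff_add, Matrix.transpose_add]

lemma trp_X_mul (P : Polynomial (Mat n)) : trp (X * P) = X * trp P := by
  refine Polynomial.ext fun j => ?_
  cases j with
  | zero => simp [trp_coeff, Polynomial.mul_coeff_zero]
  | succ j => rw [trp_coeff, Polynomial.coeff_X_mul, Polynomial.coeff_X_mul, trp_coeff]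

lemma trp_mul_C (P : Polynomial (Mat n)) (A : Mat n) :
    trp (P * C A) = C Aᵀ * trp P := by
  refine Polynomial.ext fun j => ?_
  rw [trp_coeff, Polynomial.coeff_mul_C, Polynomial.coeff_C_mul, trp_coeff,
    Matrix.transpose_mul]

lemma trp_C (A : Mat n) : trp (C A) = C Aᵀ := by
  refine Polynomial.ext fun j => ?_
  rw [trp_coeff, Polynomial.coeff_C, Polynomial.coeff_C]
  split <;> simp [*]

lemma trp_X_pow (k : ℕ) : trp ((X : Polynomial (Mat n)) ^ k) = X ^ k := by
  refine Polynomial.ext fun j => ?_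
  rw [trp_coeff, Polynomial.coeff_X_pow]
  split <;> simp

lemma trp_reflect (M : ℕ) (P : Polynomial (Mat n)) :
    trp (P.reflect M) = (trp P).reflect M := by
  refine Polynomial.ext fun j => ?_
  rw [trp_coeff, Polynomial.coeff_reflect, Polynomial.coeff_reflect, trp_coeff]

-- reflect utilities
lemma reflect_coeff_le (M : ℕ) (P : Polynomial (Mat n)) {j : ℕ} (hj : j ≤ M) :
    (P.reflect M).coeff j = P.coeff (M - j) := by
  rw [Polynomial.coeff_reflect, Polynomial.revAt_le hj]

lemma reflect_natDegree_le (M : ℕ) (P : Polynomial (Mat n)) (h : P.natDegree ≤ M) :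
    (P.reflect M).natDegree ≤ M := by
  rw [Polynomial.natDegree_le_iff_coeff_eq_zero]
  intro m hm
  rw [Polynomial.coeff_reflect]
  have : Polynomial.revAt M m = m := Polynomial.revAt_eq_self_of_lt hm
  rw [this]
  exact Polynomial.coeff_eq_zero_of_natDegree_lt (lt_of_le_of_lt h hm)

lemma reflect_reflect (M : ℕ) (P : Polynomial (Mat n)) :
    (P.reflect M).reflect M = P := by
  refine Polynomial.ext fun j => ?_
  rw [Polynomial.coeff_reflect, Polynomial.coeff_reflect, Polynomial.revAt_invol]

lemma reflect_mul_C (M : ℕ) (P : Polynomial (Mat n)) (A : Mat n) :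
    (P * C A).reflect M = P.reflect M * C A := by
  refine Polynomial.ext fun j => ?_
  rw [Polynomial.coeff_reflect, Polynomial.coeff_mul_C, Polynomial.coeff_mul_C,
    Polynomial.coeff_reflect]

lemma reflect_C_mul (M : ℕ) (P : Polynomial (Mat n)) (A : Mat n) :
    (C A * P).reflect M = C A * P.reflect M := by
  refine Polynomial.ext fun j => ?_
  rw [Polynomial.coeff_reflect, Polynomial.coeff_C_mul, Polynomial.coeff_C_mul,
    Polynomial.coeff_reflect]

/-- `reflect (M+1) p = X * reflect M p` when `deg p ≤ M`. -/
lemma reflect_succ (M : ℕ) (P : Polynomial (Mat n)) (h : P.natDegree ≤ M) :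
    P.reflect (M + 1) = X * P.reflect M := by
  refine Polynomial.ext fun j => ?_
  cases j with
  | zero =>
    rw [Polynomial.coeff_reflect, Polynomial.mul_coeff_zero, Polynomial.coeff_X_zero,
      zero_mul, Polynomial.revAt_le (Nat.zero_le _), Nat.sub_zero]
    exact Polynomial.coeff_eq_zero_of_natDegree_lt (lt_of_le_of_lt h (Nat.lt_succ_self _))
  | succ j =>
    rw [Polynomial.coeff_X_mul, Polynomial.coeff_reflect, Polynomial.coeff_reflect]
    by_cases hj : j ≤ M
    · rw [Polynomial.revAt_le hj, Polynomial.revAt_le (by omega : j + 1 ≤ M + 1)]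
      congr 1
      omega
    · rw [Polynomial.revAt_eq_self_of_lt (by omega), Polynomial.revAt_eq_self_of_lt (by omega)]
      rw [Polynomial.coeff_eq_zero_of_natDegree_lt (by omega),
        Polynomial.coeff_eq_zero_of_natDegree_lt (by omega)]

/-- `reflect (M+1) (X * q) = reflect M q` when `deg q ≤ M`. -/
lemma reflect_succ_X_mul (M : ℕ) (Q : Polynomial (Mat n)) (h : Q.natDegree ≤ M) :
    (X * Q).reflect (M + 1) = Q.reflect M := by
  refine Polynomial.ext fun j => ?_
  rw [Polynomial.coeff_reflect, Polynomial.coeff_reflect]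
  by_cases hj : j ≤ M
  · rw [Polynomial.revAt_le (by omega : j ≤ M + 1), Polynomial.revAt_le hj]
    have : M + 1 - j = (M - j) + 1 := by omega
    rw [this, Polynomial.coeff_X_mul]
  · by_cases hj1 : j = M + 1
    · subst hj1
      rw [Polynomial.revAt_le (le_refl _), Nat.sub_self, Polynomial.mul_coeff_zero,
        Polynomial.coeff_X_zero, zero_mul, Polynomial.revAt_eq_self_of_lt (by omega),
        Polynomial.coeff_eq_zero_of_natDegree_lt (by omega)]
    · rw [Polynomial.revAt_eq_self_of_lt (by omega), Polynomial.revAt_eq_self_of_lt (by omega)]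
      have hj' : j - 1 + 1 = j := by omega
      rw [← hj', Polynomial.coeff_X_mul]
      rw [Polynomial.coeff_eq_zero_of_natDegree_lt (by omega),
        Polynomial.coeff_eq_zero_of_natDegree_lt (by omega)]

lemma reflect_X_pow (M k : ℕ) (hk : k ≤ M) :
    ((X : Polynomial (Mat n)) ^ k).reflect M = X ^ (M - k) := by
  rw [Polynomial.reflect_monomial, Polynomial.revAt_le hk]

lemma pR_Xpow_rep (γ : ℤ → Mat n) (i : ℕ) (T : Polynomial (Mat n)) {b : ℕ}
    (hb : T.natDegree < b) :
    pairingR γ (X ^ i) T = ∑ j ∈ Finset.range b, γ ((i : ℤ) - (j : ℤ)) * T.coeff j := by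
  rw [pairingR_rep γ _ T (Nat.lt_succ_of_le (Polynomial.natDegree_X_pow_le i)) hb]
  rw [Finset.sum_eq_single i]
  · refine Finset.sum_congr rfl fun j _ => ?_
    rw [Polynomial.coeff_X_pow, if_pos rfl, Matrix.transpose_one, one_mul]
  · intro b' _ hb'
    refine Finset.sum_eq_zero fun j _ => ?_
    rw [Polynomial.coeff_X_pow, if_neg hb', Matrix.transpose_zero, zero_mul, zero_mul]
  · intro hi
    exact absurd (Finset.mem_range.mpr (Nat.lt_succ_self i)) hi

lemma pR_decomp (γ : ℤ → Mat n) (P T : Polynomial (Mat n)) {a : ℕ}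
    (ha : P.natDegree < a) :
    pairingR γ P T = ∑ i ∈ Finset.range a, (P.coeff i)ᵀ * pairingR γ (X ^ i) T := by
  rw [pairingR_rep γ P T ha (Nat.lt_succ_self T.natDegree)]
  refine Finset.sum_congr rfl fun i _ => ?_
  rw [pR_Xpow_rep γ i T (Nat.lt_succ_self T.natDegree), Finset.mul_sum]
  refine Finset.sum_congr rfl fun j _ => ?_
  rw [mul_assoc]

section Families

variable (γ : ℤ → Mat n) (P1l P2l P1r P2r : ℕ → Polynomial (Mat n))
variable (hl hr : ℕ → Mat n)

lemma monic_zero_eq_C_one (F : ℕ → Polynomial (Mat n))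
    (hmon : ∀ N, (F N).Monic ∧ (F N).natDegree = N) : F 0 = C 1 := by
  have h1 := (hmon 0).1
  have h2 := (hmon 0).2
  have h3 : F 0 = C ((F 0).coeff 0) := Polynomial.eq_C_of_natDegree_le_zero (le_of_eq h2)
  have h4 : (F 0).coeff 0 = 1 := by
    have := h1.coeff_natDegree
    rwa [h2] at this
  rw [h3, h4]

/-- Expansion lemma: pairing of `P2r M` against any polynomial of degree `≤ M`. -/
lemma E1 (hmon : ∀ N, (P1r N).Monic ∧ (P1r N).natDegree = N)
    (hbr : ∀ N M, pairingR γ (P2r N) (P1r M) = if N = M then hr N else 0) :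
    ∀ k (T : Polynomial (Mat n)), T.natDegree ≤ k → ∀ M, k ≤ M →
      pairingR γ (P2r M) T = hr M * T.coeff M := by
  intro k
  induction k with
  | zero =>
    intro T hT M _
    have h10 : P1r 0 = C 1 := monic_zero_eq_C_one P1r hmon
    have hT1 : T = P1r 0 * C (T.coeff 0) := by
      rw [h10, ← Polynomial.C_mul, one_mul]
      exact Polynomial.eq_C_of_natDegree_le_zero hT
    have hval : pairingR γ (P2r M) T = (if M = 0 then hr M else 0) * T.coeff 0 := by
      conv_lhs => rw [hT1]
      rw [pR_mulC_right, hbr M 0]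
    by_cases hM : M = 0
    · subst hM; rw [hval, if_pos rfl]
    · rw [hval, if_neg hM, zero_mul,
        Polynomial.coeff_eq_zero_of_natDegree_lt
          (lt_of_le_of_lt hT (Nat.pos_of_ne_zero hM)), mul_zero]
  | succ k ih =>
    intro T hT M hM
    set A := T.coeff (k + 1) with hA
    have hP1deg : (P1r (k+1)).natDegree = k+1 := (hmon (k+1)).2
    have hP1top : (P1r (k+1)).coeff (k+1) = 1 := by
      have := (hmon (k+1)).1.coeff_natDegree
      rwa [hP1deg] at this
    have hdeg : (T - P1r (k+1) * C A).natDegree ≤ k := by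
      rw [Polynomial.natDegree_le_iff_coeff_eq_zero]
      intro m hm
      rw [Polynomial.coeff_sub, Polynomial.coeff_mul_C]
      by_cases hmk : m = k + 1
      · subst hmk; rw [hP1top, one_mul, ← hA, sub_self]
      · rw [Polynomial.coeff_eq_zero_of_natDegree_lt (hT.trans_lt (by omega)),
          Polynomial.coeff_eq_zero_of_natDegree_lt (by omega), zero_mul, sub_zero]
    have hsplit : T = (T - P1r (k+1) * C A) + P1r (k+1) * C A :=
      (sub_add_cancel T _).symm
    have step : pairingR γ (P2r M) T
        = pairingR γ (P2r M) (T - P1r (k+1) * C A)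
          + pairingR γ (P2r M) (P1r (k+1)) * A := by
      conv_lhs => rw [hsplit]
      rw [pR_add_right, pR_mulC_right]
    rw [step, ih _ hdeg M (by omega), hbr M (k+1)]
    by_cases hMk : M = k + 1
    · subst hMk
      rw [if_pos rfl, Polynomial.coeff_eq_zero_of_natDegree_lt (by omega), mul_zero,
        zero_add, hA]
    · rw [if_neg hMk, zero_mul, add_zero]
      congr 1
      rw [Polynomial.coeff_sub, Polynomial.coeff_mul_C,
        Polynomial.coeff_eq_zero_of_natDegree_lt (by omega : (P1r (k+1)).natDegree < M),
        zero_mul, sub_zero]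

/-- Expansion lemma: pairing of any polynomial of degree `≤ M` against `P1r M`. -/
lemma E2 (hmon : ∀ N, (P2r N).Monic ∧ (P2r N).natDegree = N)
    (hbr : ∀ N M, pairingR γ (P2r N) (P1r M) = if N = M then hr N else 0) :
    ∀ k (T : Polynomial (Mat n)), T.natDegree ≤ k → ∀ M, k ≤ M →
      pairingR γ T (P1r M) = (T.coeff M)ᵀ * hr M := by
  intro k
  induction k with
  | zero =>
    intro T hT M _
    have h20 : P2r 0 = C 1 := monic_zero_eq_C_one P2r hmon
    have hT1 : T = P2r 0 * C (T.coeff 0) := by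
      rw [h20, ← Polynomial.C_mul, one_mul]
      exact Polynomial.eq_C_of_natDegree_le_zero hT
    have hval : pairingR γ T (P1r M)
        = (T.coeff 0)ᵀ * (if 0 = M then hr 0 else 0) := by
      conv_lhs => rw [hT1]
      rw [pR_mulC_left, hbr 0 M]
    by_cases hM : M = 0
    · subst hM; rw [hval, if_pos rfl]
    · rw [hval, if_neg (fun h => hM h.symm), mul_zero,
        Polynomial.coeff_eq_zero_of_natDegree_lt
          (lt_of_le_of_lt hT (Nat.pos_of_ne_zero hM)), Matrix.transpose_zero, zero_mul]
  | succ k ih =>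
    intro T hT M hM
    set A := T.coeff (k + 1) with hA
    have hP2deg : (P2r (k+1)).natDegree = k+1 := (hmon (k+1)).2
    have hP2top : (P2r (k+1)).coeff (k+1) = 1 := by
      have := (hmon (k+1)).1.coeff_natDegree
      rwa [hP2deg] at this
    have hdeg : (T - P2r (k+1) * C A).natDegree ≤ k := by
      rw [Polynomial.natDegree_le_iff_coeff_eq_zero]
      intro m hm
      rw [Polynomial.coeff_sub, Polynomial.coeff_mul_C]
      by_cases hmk : m = k + 1
      · subst hmk; rw [hP2top, one_mul, ← hA, sub_self]
      · rw [Polynomial.coeff_eq_zero_of_natDegree_lt (hT.trans_lt (by omega)),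
          Polynomial.coeff_eq_zero_of_natDegree_lt (by omega), zero_mul, sub_zero]
    have hsplit : T = (T - P2r (k+1) * C A) + P2r (k+1) * C A :=
      (sub_add_cancel T _).symm
    have step : pairingR γ T (P1r M)
        = pairingR γ (T - P2r (k+1) * C A) (P1r M)
          + Aᵀ * pairingR γ (P2r (k+1)) (P1r M) := by
      conv_lhs => rw [hsplit]
      rw [pR_add_left, pR_mulC_left]
    rw [step, ih _ hdeg M (by omega), hbr (k+1) M]
    by_cases hMk : M = k + 1
    · subst hMk
      rw [if_pos rfl, Polynomial.coeff_eq_zero_of_natDegree_lt (by omega),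
        Matrix.transpose_zero, zero_mul, zero_add, hA]
    · rw [if_neg (fun h => hMk h.symm), mul_zero, add_zero]
      congr 2
      rw [Polynomial.coeff_sub, Polynomial.coeff_mul_C,
        Polynomial.coeff_eq_zero_of_natDegree_lt (by omega : (P2r (k+1)).natDegree < M),
        zero_mul, sub_zero]

/-- Expansion lemma: left pairing of degree `≤ M` polynomial against `P2l M`. -/
lemma E3 (hmon : ∀ N, (P1l N).Monic ∧ (P1l N).natDegree = N)
    (hbl : ∀ N M, pairingL γ (P1l N) (P2l M) = if N = M then hl N else 0) :
    ∀ k (T : Polynomial (Mat n)), T.natDegree ≤ k → ∀ M, k ≤ M →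
      pairingL γ T (P2l M) = T.coeff M * hl M := by
  intro k
  induction k with
  | zero =>
    intro T hT M _
    have h10 : P1l 0 = C 1 := monic_zero_eq_C_one P1l hmon
    have hT1 : T = C (T.coeff 0) * P1l 0 := by
      rw [h10, ← Polynomial.C_mul, mul_one]
      exact Polynomial.eq_C_of_natDegree_le_zero hT
    have hval : pairingL γ T (P2l M)
        = T.coeff 0 * (if 0 = M then hl 0 else 0) := by
      conv_lhs => rw [hT1]
      rw [pL_Cmul_left, hbl 0 M]
    by_cases hM : M = 0
    · subst hM; rw [hval, if_pos rfl]
    · rw [hval, if_neg (fun h => hM h.symm), mul_zero,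
        Polynomial.coeff_eq_zero_of_natDegree_lt
          (lt_of_le_of_lt hT (Nat.pos_of_ne_zero hM)), zero_mul]
  | succ k ih =>
    intro T hT M hM
    set A := T.coeff (k + 1) with hA
    have hP1deg : (P1l (k+1)).natDegree = k+1 := (hmon (k+1)).2
    have hP1top : (P1l (k+1)).coeff (k+1) = 1 := by
      have := (hmon (k+1)).1.coeff_natDegree
      rwa [hP1deg] at this
    have hdeg : (T - C A * P1l (k+1)).natDegree ≤ k := by
      rw [Polynomial.natDegree_le_iff_coeff_eq_zero]
      intro m hm
      rw [Polynomial.coeff_sub, Polynomial.coeff_C_mul]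
      by_cases hmk : m = k + 1
      · subst hmk; rw [hP1top, mul_one, ← hA, sub_self]
      · rw [Polynomial.coeff_eq_zero_of_natDegree_lt (hT.trans_lt (by omega)),
          Polynomial.coeff_eq_zero_of_natDegree_lt (by omega), mul_zero, sub_zero]
    have hsplit : T = (T - C A * P1l (k+1)) + C A * P1l (k+1) :=
      (sub_add_cancel T _).symm
    have step : pairingL γ T (P2l M)
        = pairingL γ (T - C A * P1l (k+1)) (P2l M)
          + A * pairingL γ (P1l (k+1)) (P2l M) := by
      conv_lhs => rw [hsplit]
      rw [pL_add_left, pL_Cmul_left]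
    rw [step, ih _ hdeg M (by omega), hbl (k+1) M]
    by_cases hMk : M = k + 1
    · subst hMk
      rw [if_pos rfl, Polynomial.coeff_eq_zero_of_natDegree_lt (by omega), zero_mul,
        zero_add, hA]
    · rw [if_neg (fun h => hMk h.symm), mul_zero, add_zero]
      congr 1
      rw [Polynomial.coeff_sub, Polynomial.coeff_C_mul,
        Polynomial.coeff_eq_zero_of_natDegree_lt (by omega : (P1l (k+1)).natDegree < M),
        mul_zero, sub_zero]

/-- Expansion lemma: left pairing of `P1l M` against degree `≤ M` polynomial. -/
lemma E4 (hmon : ∀ N, (P2l N).Monic ∧ (P2l N).natDegree = N)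
    (hbl : ∀ N M, pairingL γ (P1l N) (P2l M) = if N = M then hl N else 0) :
    ∀ k (T : Polynomial (Mat n)), T.natDegree ≤ k → ∀ M, k ≤ M →
      pairingL γ (P1l M) T = hl M * (T.coeff M)ᵀ := by
  intro k
  induction k with
  | zero =>
    intro T hT M _
    have h20 : P2l 0 = C 1 := monic_zero_eq_C_one P2l hmon
    have hT1 : T = C (T.coeff 0) * P2l 0 := by
      rw [h20, ← Polynomial.C_mul, mul_one]
      exact Polynomial.eq_C_of_natDegree_le_zero hT
    have hval : pairingL γ (P1l M) T
        = (if M = 0 then hl M else 0) * (T.coeff 0)ᵀ := by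
      conv_lhs => rw [hT1]
      rw [pL_Cmul_right, hbl M 0]
    by_cases hM : M = 0
    · subst hM; rw [hval, if_pos rfl]
    · rw [hval, if_neg hM, zero_mul,
        Polynomial.coeff_eq_zero_of_natDegree_lt
          (lt_of_le_of_lt hT (Nat.pos_of_ne_zero hM)), Matrix.transpose_zero, mul_zero]
  | succ k ih =>
    intro T hT M hM
    set A := T.coeff (k + 1) with hA
    have hP2deg : (P2l (k+1)).natDegree = k+1 := (hmon (k+1)).2
    have hP2top : (P2l (k+1)).coeff (k+1) = 1 := by
      have := (hmon (k+1)).1.coeff_natDegree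
      rwa [hP2deg] at this
    have hdeg : (T - C A * P2l (k+1)).natDegree ≤ k := by
      rw [Polynomial.natDegree_le_iff_coeff_eq_zero]
      intro m hm
      rw [Polynomial.coeff_sub, Polynomial.coeff_C_mul]
      by_cases hmk : m = k + 1
      · subst hmk; rw [hP2top, mul_one, ← hA, sub_self]
      · rw [Polynomial.coeff_eq_zero_of_natDegree_lt (hT.trans_lt (by omega)),
          Polynomial.coeff_eq_zero_of_natDegree_lt (by omega), mul_zero, sub_zero]
    have hsplit : T = (T - C A * P2l (k+1)) + C A * P2l (k+1) :=
      (sub_add_cancel T _).symm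
    have step : pairingL γ (P1l M) T
        = pairingL γ (P1l M) (T - C A * P2l (k+1))
          + pairingL γ (P1l M) (P2l (k+1)) * Aᵀ := by
      conv_lhs => rw [hsplit]
      rw [pL_add_right, pL_Cmul_right]
    rw [step, ih _ hdeg M (by omega), hbl M (k+1)]
    by_cases hMk : M = k + 1
    · subst hMk
      rw [if_pos rfl, Polynomial.coeff_eq_zero_of_natDegree_lt (by omega),
        Matrix.transpose_zero, mul_zero, zero_add, hA]
    · rw [if_neg hMk, zero_mul, add_zero]
      congr 2
      rw [Polynomial.coeff_sub, Polynomial.coeff_C_mul,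
        Polynomial.coeff_eq_zero_of_natDegree_lt (by omega : (P2l (k+1)).natDegree < M),
        mul_zero, sub_zero]

end Families
section Inj

variable (γ : ℤ → Mat n) (P1r P2r : ℕ → Polynomial (Mat n)) (hr : ℕ → Mat n)

/-- If all moments up to level `m` vanish, a polynomial of degree `≤ m` is zero. -/
lemma key_inj (hmon1 : ∀ N, (P1r N).Monic ∧ (P1r N).natDegree = N)
    (hmon2 : ∀ N, (P2r N).Monic ∧ (P2r N).natDegree = N)
    (hbr : ∀ N M, pairingR γ (P2r N) (P1r M) = if N = M then hr N else 0)
    (hrunit : ∀ N, IsUnit (hr N)) :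
    ∀ m (T : Polynomial (Mat n)), T.natDegree ≤ m →
      (∀ j, j ≤ m → pairingR γ (X ^ j) T = 0) → T = 0 := by
  have coeffzero : ∀ m (T : Polynomial (Mat n)), T.natDegree ≤ m →
      (∀ j, j ≤ m → pairingR γ (X ^ j) T = 0) → T.coeff m = 0 := by
    intro m T hT hmom
    have h1 : pairingR γ (P2r m) T = hr m * T.coeff m :=
      E1 γ P1r P2r hr hmon1 hbr m T hT m le_rfl
    have h2 : pairingR γ (P2r m) T = 0 := by
      rw [pR_decomp γ (P2r m) T (Nat.lt_succ_of_le (le_of_eq (hmon2 m).2))]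
      refine Finset.sum_eq_zero fun i hi => ?_
      rw [hmom i (Nat.lt_succ_iff.mp (Finset.mem_range.mp hi)), mul_zero]
    refine (hrunit m).mul_left_cancel ?_
    rw [← h1, h2, mul_zero]
  intro m
  induction m with
  | zero =>
    intro T hT hmom
    have h0 : T.coeff 0 = 0 := coeffzero 0 T hT hmom
    rw [Polynomial.eq_C_of_natDegree_le_zero hT, h0, map_zero]
  | succ m ih =>
    intro T hT hmom
    have h0 : T.coeff (m + 1) = 0 := coeffzero (m + 1) T hT hmom
    have hT' : T.natDegree ≤ m := by
      rw [Polynomial.natDegree_le_iff_coeff_eq_zero]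
      intro N hN
      by_cases hNm : N = m + 1
      · subst hNm; exact h0
      · exact Polynomial.coeff_eq_zero_of_natDegree_lt (by omega)
    exact ih T hT' fun j hj => hmom j (by omega)

end Inj

/-- Swap identity relating the two pairings via reflection and transposition. -/
lemma swap1 (γ : ℤ → Mat n) (M : ℕ) (A B : Polynomial (Mat n))
    (hA : A.natDegree ≤ M) (hB : B.natDegree ≤ M) :
    pairingR γ A ((trp B).reflect M) = pairingL γ ((trp A).reflect M) B := by
  have hA' : ((trp A).reflect M).natDegree < M + 1 :=
    Nat.lt_succ_of_le (reflect_natDegree_le M _ ((trp_natDegree_le A).trans hA))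
  have hB' : ((trp B).reflect M).natDegree < M + 1 :=
    Nat.lt_succ_of_le (reflect_natDegree_le M _ ((trp_natDegree_le B).trans hB))
  rw [pairingR_rep γ A _ (Nat.lt_succ_of_le hA) hB',
    pairingL_rep γ _ B hA' (Nat.lt_succ_of_le hB)]
  have lhs_eq : ∀ i ∈ Finset.range (M + 1),
      (∑ j ∈ Finset.range (M + 1),
        (A.coeff i)ᵀ * γ ((i : ℤ) - (j : ℤ)) * ((trp B).reflect M).coeff j)
      = ∑ t ∈ Finset.range (M + 1),
        (A.coeff i)ᵀ * γ ((i : ℤ) + (t : ℤ) - (M : ℤ)) * (B.coeff t)ᵀ := by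
    intro i _
    rw [← Finset.sum_range_reflect
      (fun j => (A.coeff i)ᵀ * γ ((i : ℤ) - (j : ℤ)) * ((trp B).reflect M).coeff j)
      (M + 1)]
    refine Finset.sum_congr rfl fun t ht => ?_
    have ht' : t ≤ M := Nat.lt_succ_iff.mp (Finset.mem_range.mp ht)
    have h1 : M + 1 - 1 - t = M - t := by omega
    rw [h1, reflect_coeff_le M (trp B) (Nat.sub_le M t), trp_coeff]
    have h2 : M - (M - t) = t := by omega
    rw [h2]
    have h3 : ((i : ℤ) - ((M - t : ℕ) : ℤ)) = (i : ℤ) + (t : ℤ) - (M : ℤ) := by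
      omega
    rw [h3]
  rw [Finset.sum_congr rfl lhs_eq]
  rw [← Finset.sum_range_reflect
    (fun u => ∑ t ∈ Finset.range (M + 1),
      ((trp A).reflect M).coeff u * γ ((t : ℤ) - (u : ℤ)) * (B.coeff t)ᵀ) (M + 1)]
  refine Finset.sum_congr rfl fun i hi => ?_
  have hi' : i ≤ M := Nat.lt_succ_iff.mp (Finset.mem_range.mp hi)
  have h1 : M + 1 - 1 - i = M - i := by omega
  rw [h1]
  refine Finset.sum_congr rfl fun t _ => ?_
  rw [reflect_coeff_le M (trp A) (Nat.sub_le M i), trp_coeff]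
  have h2 : M - (M - i) = i := by omega
  rw [h2]
  have h3 : ((t : ℤ) - ((M - i : ℕ) : ℤ)) = (i : ℤ) + (t : ℤ) - (M : ℤ) := by
    omega
  rw [h3]

/-- Second swap identity. -/
lemma swap2 (γ : ℤ → Mat n) (M : ℕ) (A B : Polynomial (Mat n))
    (hA : A.natDegree ≤ M) (hB : B.natDegree ≤ M) :
    pairingL γ A ((trp B).reflect M) = pairingR γ ((trp A).reflect M) B := by
  have hA' : ((trp A).reflect M).natDegree < M + 1 :=
    Nat.lt_succ_of_le (reflect_natDegree_le M _ ((trp_natDegree_le A).trans hA))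
  have hB' : ((trp B).reflect M).natDegree < M + 1 :=
    Nat.lt_succ_of_le (reflect_natDegree_le M _ ((trp_natDegree_le B).trans hB))
  rw [pairingL_rep γ A _ (Nat.lt_succ_of_le hA) hB',
    pairingR_rep γ _ B hA' (Nat.lt_succ_of_le hB)]
  have lhs_eq : ∀ i ∈ Finset.range (M + 1),
      (∑ j ∈ Finset.range (M + 1),
        A.coeff i * γ ((j : ℤ) - (i : ℤ)) * (((trp B).reflect M).coeff j)ᵀ)
      = ∑ t ∈ Finset.range (M + 1),
        A.coeff i * γ ((M : ℤ) - (i : ℤ) - (t : ℤ)) * B.coeff t := by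
    intro i _
    rw [← Finset.sum_range_reflect
      (fun j => A.coeff i * γ ((j : ℤ) - (i : ℤ)) * (((trp B).reflect M).coeff j)ᵀ)
      (M + 1)]
    refine Finset.sum_congr rfl fun t ht => ?_
    have ht' : t ≤ M := Nat.lt_succ_iff.mp (Finset.mem_range.mp ht)
    have h1 : M + 1 - 1 - t = M - t := by omega
    rw [h1, reflect_coeff_le M (trp B) (Nat.sub_le M t), trp_coeff,
      Matrix.transpose_transpose]
    have h2 : M - (M - t) = t := by omega
    rw [h2]
    have h3 : (((M - t : ℕ) : ℤ) - (i : ℤ)) = (M : ℤ) - (i : ℤ) - (t : ℤ) := by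
      omega
    rw [h3]
  rw [Finset.sum_congr rfl lhs_eq]
  rw [← Finset.sum_range_reflect
    (fun u => ∑ t ∈ Finset.range (M + 1),
      (((trp A).reflect M).coeff u)ᵀ * γ ((u : ℤ) - (t : ℤ)) * B.coeff t) (M + 1)]
  refine Finset.sum_congr rfl fun i hi => ?_
  have hi' : i ≤ M := Nat.lt_succ_iff.mp (Finset.mem_range.mp hi)
  have h1 : M + 1 - 1 - i = M - i := by omega
  rw [h1]
  refine Finset.sum_congr rfl fun t _ => ?_
  have h2 : M - (M - i) = i := by omega
  have e1 : (((trp A).reflect M).coeff (M - i))ᵀ = A.coeff i := by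
    simp [reflect_coeff_le M (trp A) (Nat.sub_le M i), trp_coeff, h2]
  have h3 : (((M - i : ℕ) : ℤ) - (t : ℤ)) = (M : ℤ) - (i : ℤ) - (t : ℤ) := by
    omega
  rw [e1, h3]
section Main

variable (γ : ℤ → Mat n) (P1l P2l P1r P2r : ℕ → Polynomial (Mat n))
variable (hl hr : ℕ → Mat n)

lemma ndeg_X_mul (P : Polynomial (Mat n)) : (X * P).natDegree ≤ P.natDegree + 1 := by
  have h1 := Polynomial.natDegree_mul_le (p := (X : Polynomial (Mat n))) (q := P)
  have h2 : (X : Polynomial (Mat n)).natDegree ≤ 1 := Polynomial.natDegree_X_le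
  omega

/-- Moments of the transposed reflected `P2l M`. -/
lemma V1 (hm1l : ∀ N, (P1l N).Monic ∧ (P1l N).natDegree = N)
    (hm2l : ∀ N, (P2l N).Monic ∧ (P2l N).natDegree = N)
    (hbl : ∀ N M, pairingL γ (P1l N) (P2l M) = if N = M then hl N else 0) :
    ∀ M i, i ≤ M → pairingR γ (X ^ i) (trp ((P2l M).reflect M))
      = if i = 0 then hl M else 0 := by
  intro M i hi
  rw [trp_reflect]
  rw [swap1 γ M (X ^ i) (P2l M) ((Polynomial.natDegree_X_pow_le i).trans hi)
    (le_of_eq (hm2l M).2)]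
  rw [trp_X_pow, reflect_X_pow M i hi]
  rw [E3 γ P1l P2l hl hm1l hbl M (X ^ (M - i))
    ((Polynomial.natDegree_X_pow_le _).trans (Nat.sub_le M i)) M le_rfl]
  rw [Polynomial.coeff_X_pow]
  by_cases h0 : i = 0
  · subst h0; rw [if_pos (by omega), if_pos rfl, one_mul]
  · rw [if_neg (by omega), if_neg h0, zero_mul]

/-- `e_{M+1}` is symmetric. -/
lemma symE (hm2l : ∀ N, (P2l N).Monic ∧ (P2l N).natDegree = N)
    (hm1r : ∀ N, (P1r N).Monic ∧ (P1r N).natDegree = N)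
    (hbr : ∀ N M, pairingR γ (P2r N) (P1r M) = if N = M then hr N else 0)
    (hrunit : ∀ N, IsUnit (hr N))
    (hrec2' : ∀ N, (P2l (N+1)).reflect (N+1)
      = (P2l N).reflect N + X * P1r N * C (((P2l (N+1)).coeff 0)ᵀ)) :
    ∀ M, ((P2l (M+1)).coeff 0)ᵀ = (P2l (M+1)).coeff 0 := by
  intro M
  set e0 := (P2l (M+1)).coeff 0 with he0
  have hQ1deg : ((P2l (M+1)).reflect (M+1)).natDegree ≤ M + 1 :=
    reflect_natDegree_le _ _ (le_of_eq (hm2l (M+1)).2)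
  have hQdeg : ((P2l M).reflect M).natDegree ≤ M :=
    reflect_natDegree_le _ _ (le_of_eq (hm2l M).2)
  have hQ1top : ((P2l (M+1)).reflect (M+1)).coeff (M+1) = e0 := by
    rw [reflect_coeff_le _ _ (le_refl (M+1)), Nat.sub_self]
  have lhs : pairingR γ (P2r (M+1)) ((P2l (M+1)).reflect (M+1)) = hr (M+1) * e0 := by
    rw [E1 γ P1r P2r hr hm1r hbr (M+1) _ hQ1deg (M+1) le_rfl, hQ1top]
  have rhs : pairingR γ (P2r (M+1)) ((P2l (M+1)).reflect (M+1))
      = hr (M+1) * e0ᵀ := by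
    rw [hrec2' M, pR_add_right, pR_mulC_right]
    have t1 : pairingR γ (P2r (M+1)) ((P2l M).reflect M) = 0 := by
      rw [E1 γ P1r P2r hr hm1r hbr (M+1) _ (hQdeg.trans (Nat.le_succ M)) (M+1) le_rfl,
        Polynomial.coeff_eq_zero_of_natDegree_lt (by omega), mul_zero]
    have t2 : pairingR γ (P2r (M+1)) (X * P1r M) = hr (M+1) := by
      rw [E1 γ P1r P2r hr hm1r hbr (M+1) _ ((ndeg_X_mul (P1r M)).trans
        (by rw [(hm1r M).2])) (M+1) le_rfl]
      have : (X * P1r M).coeff (M + 1) = 1 := by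
        rw [Polynomial.coeff_X_mul]
        have := (hm1r M).1.coeff_natDegree
        rwa [(hm1r M).2] at this
      rw [this, mul_one]
    rw [t1, t2, zero_add]
  exact (hrunit (M+1)).mul_left_cancel (by rw [← rhs, lhs])

/-- Key symmetry: `C e_{M+1}` commutes with `P1r M` up to transposition. -/
lemma U_zero (hm1l : ∀ N, (P1l N).Monic ∧ (P1l N).natDegree = N)
    (hm2l : ∀ N, (P2l N).Monic ∧ (P2l N).natDegree = N)
    (hm1r : ∀ N, (P1r N).Monic ∧ (P1r N).natDegree = N)
    (hm2r : ∀ N, (P2r N).Monic ∧ (P2r N).natDegree = N)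
    (hbl : ∀ N M, pairingL γ (P1l N) (P2l M) = if N = M then hl N else 0)
    (hbr : ∀ N M, pairingR γ (P2r N) (P1r M) = if N = M then hr N else 0)
    (hrunit : ∀ N, IsUnit (hr N))
    (hrec2' : ∀ N, (P2l (N+1)).reflect (N+1)
      = (P2l N).reflect N + X * P1r N * C (((P2l (N+1)).coeff 0)ᵀ)) :
    ∀ M, C ((P2l (M+1)).coeff 0) * trp (P1r M)
      = P1r M * C ((P2l (M+1)).coeff 0) := by
  intro M
  set e0 := (P2l (M+1)).coeff 0 with he0
  -- transposed recursion
  have htr : trp ((P2l (M+1)).reflect (M+1))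
      = trp ((P2l M).reflect M) + X * (C e0 * trp (P1r M)) := by
    rw [hrec2' M, trp_add, trp_mul_C, Matrix.transpose_transpose, trp_X_mul]
    congr 1
    rw [← mul_assoc, ← Polynomial.X_mul, mul_assoc]
  -- moments of U vanish below level M
  have hmom : ∀ j, j < M →
      pairingR γ (X ^ j) (C e0 * trp (P1r M) - P1r M * C e0) = 0 := by
    intro j hj
    rw [pR_sub_right]
    have m1 : pairingR γ (X ^ j) (C e0 * trp (P1r M)) = 0 := by
      have h1 : pairingR γ (X ^ (j+1)) (trp ((P2l (M+1)).reflect (M+1))) = 0 := by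
        rw [V1 γ P1l P2l hl hm1l hm2l hbl (M+1) (j+1) (by omega), if_neg (by omega)]
      have h2 : pairingR γ (X ^ (j+1)) (trp ((P2l M).reflect M)) = 0 := by
        rw [V1 γ P1l P2l hl hm1l hm2l hbl M (j+1) (by omega), if_neg (by omega)]
      rw [htr, pR_add_right, h2, zero_add] at h1
      rw [pow_succ'] at h1
      rwa [pR_XX] at h1
    have m2 : pairingR γ (X ^ j) (P1r M * C e0) = 0 := by
      rw [pR_mulC_right,
        E2 γ P1r P2r hr hm2r hbr M (X ^ j)
          ((Polynomial.natDegree_X_pow_le j).trans (by omega)) M le_rfl,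
        Polynomial.coeff_X_pow, if_neg (by omega), Matrix.transpose_zero,
        zero_mul, zero_mul]
    rw [m1, m2, sub_zero]
  -- top coefficient of U vanishes
  have htop : (C e0 * trp (P1r M) - P1r M * C e0).coeff M = 0 := by
    rw [Polynomial.coeff_sub, Polynomial.coeff_C_mul, Polynomial.coeff_mul_C, trp_coeff]
    have h1 : (P1r M).coeff M = 1 := by
      have := (hm1r M).1.coeff_natDegree
      rwa [(hm1r M).2] at this
    rw [h1, Matrix.transpose_one, mul_one, one_mul, sub_self]
  have hdeg : (C e0 * trp (P1r M) - P1r M * C e0).natDegree ≤ M := by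
    refine (Polynomial.natDegree_sub_le _ _).trans ?_
    have d1 : (C e0 * trp (P1r M)).natDegree ≤ M :=
      (Polynomial.natDegree_C_mul_le _ _).trans
        ((trp_natDegree_le _).trans (le_of_eq (hm1r M).2))
    have d2 : (P1r M * C e0).natDegree ≤ M :=
      (Polynomial.natDegree_mul_le).trans
        (by simp [Polynomial.natDegree_C, (hm1r M).2])
    omega
  have hUzero : C e0 * trp (P1r M) - P1r M * C e0 = 0 := by
    cases M with
    | zero =>
      rw [Polynomial.eq_C_of_natDegree_le_zero hdeg, htop, map_zero]
    | succ m =>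
      have hdeg' : (C e0 * trp (P1r (m+1)) - P1r (m+1) * C e0).natDegree ≤ m := by
        rw [Polynomial.natDegree_le_iff_coeff_eq_zero]
        intro N hN
        by_cases hNm : N = m + 1
        · subst hNm; exact htop
        · exact Polynomial.coeff_eq_zero_of_natDegree_lt (by omega)
      exact key_inj γ P1r P2r hr hm1r hm2r hbr hrunit m _ hdeg'
        (fun j hj => hmom j (by omega))
  exact sub_eq_zero.mp hUzero

/-- All coefficients of `P2l M` are symmetric. -/
lemma sym1 (hm1l : ∀ N, (P1l N).Monic ∧ (P1l N).natDegree = N)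
    (hm2l : ∀ N, (P2l N).Monic ∧ (P2l N).natDegree = N)
    (hm1r : ∀ N, (P1r N).Monic ∧ (P1r N).natDegree = N)
    (hm2r : ∀ N, (P2r N).Monic ∧ (P2r N).natDegree = N)
    (hbl : ∀ N M, pairingL γ (P1l N) (P2l M) = if N = M then hl N else 0)
    (hbr : ∀ N M, pairingR γ (P2r N) (P1r M) = if N = M then hr N else 0)
    (hrunit : ∀ N, IsUnit (hr N))
    (hrec2' : ∀ N, (P2l (N+1)).reflect (N+1)
      = (P2l N).reflect N + X * P1r N * C (((P2l (N+1)).coeff 0)ᵀ)) :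
    ∀ M, trp (P2l M) = P2l M := by
  intro M
  induction M with
  | zero =>
    have h0 : P2l 0 = C 1 := monic_zero_eq_C_one P2l hm2l
    rw [h0, trp_C, Matrix.transpose_one]
  | succ M ih =>
    set e0 := (P2l (M+1)).coeff 0 with he0
    -- the reflected recursion
    have hrecL : P2l (M+1) = X * P2l M + (P1r M).reflect M * C (e0ᵀ) := by
      have h1 := congrArg (fun p => p.reflect (M+1)) (hrec2' M)
      rw [reflect_reflect, Polynomial.reflect_add] at h1
      rw [reflect_succ M _ (reflect_natDegree_le _ _ (le_of_eq (hm2l M).2)),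
        reflect_reflect] at h1
      rw [reflect_mul_C, reflect_succ_X_mul M _ (le_of_eq (hm1r M).2)] at h1
      exact h1
    have hsym : e0ᵀ = e0 := symE γ P2l P1r P2r hr hm2l hm1r hbr hrunit hrec2' M
    conv_lhs => rw [hrecL]
    rw [trp_add, trp_X_mul, ih]
    conv_rhs => rw [hrecL]
    congr 1
    calc trp ((P1r M).reflect M * C (e0ᵀ))
        = C ((e0ᵀ)ᵀ) * trp ((P1r M).reflect M) := trp_mul_C _ _
      _ = C e0 * (trp (P1r M)).reflect M := by
          rw [Matrix.transpose_transpose, trp_reflect]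
      _ = (C e0 * trp (P1r M)).reflect M := (reflect_C_mul _ _ _).symm
      _ = (P1r M * C e0).reflect M := by
          rw [U_zero γ P1l P2l P1r P2r hl hr hm1l hm2l hm1r hm2r hbl hbr hrunit
            hrec2' M]
      _ = (P1r M).reflect M * C e0 := reflect_mul_C _ _ _
      _ = (P1r M).reflect M * C (e0ᵀ) := by rw [hsym]

/-- The zeroth moment of `Q_M` equals `hl M`. -/
lemma p_eq_hl (hm1l : ∀ N, (P1l N).Monic ∧ (P1l N).natDegree = N)
    (hm2l : ∀ N, (P2l N).Monic ∧ (P2l N).natDegree = N)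
    (hm1r : ∀ N, (P1r N).Monic ∧ (P1r N).natDegree = N)
    (hm2r : ∀ N, (P2r N).Monic ∧ (P2r N).natDegree = N)
    (hbl : ∀ N M, pairingL γ (P1l N) (P2l M) = if N = M then hl N else 0)
    (hbr : ∀ N M, pairingR γ (P2r N) (P1r M) = if N = M then hr N else 0)
    (hrunit : ∀ N, IsUnit (hr N))
    (hrec2' : ∀ N, (P2l (N+1)).reflect (N+1)
      = (P2l N).reflect N + X * P1r N * C (((P2l (N+1)).coeff 0)ᵀ)) :
    ∀ M, pairingR γ (C 1) ((P2l M).reflect M) = hl M := by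
  intro M
  have h1 := V1 γ P1l P2l hl hm1l hm2l hbl M 0 (Nat.zero_le M)
  rw [if_pos rfl] at h1
  rw [trp_reflect, sym1 γ P1l P2l P1r P2r hl hr hm1l hm2l hm1r hm2r hbl hbr hrunit
    hrec2' M] at h1
  rw [pow_zero] at h1
  rwa [Polynomial.C_1]

end Main

end MBPAux

open MBPAux

/-- Ratios of normalization matrices via reflection coefficients:
`(hʳ_N)⁻¹ hʳ_{N+1} = I - yˡ_{N+1} xʳ_{N+1}` and
`hˡ_{N+1} (hˡ_N)⁻¹ = I - xˡ_{N+1} yʳ_{N+1}`, where `xˡ_N = P⁽¹⁾ˡ_N(0)`,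
`xʳ_N = P⁽¹⁾ʳ_N(0)`, `yˡ_N = (P⁽²⁾ˡ_N(0))ᵀ`, `yʳ_N = (P⁽²⁾ʳ_N(0))ᵀ`. -/
theorem h_ratio_matrix {n : ℕ} (γ : ℤ → Matrix (Fin n) (Fin n) ℂ)
    (P1l P2l P1r P2r : ℕ → Polynomial (Matrix (Fin n) (Fin n) ℂ))
    (hl hr : ℕ → Matrix (Fin n) (Fin n) ℂ)
    (hmon : ∀ N, (P1l N).Monic ∧ (P1l N).natDegree = N ∧
      (P2l N).Monic ∧ (P2l N).natDegree = N ∧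
      (P1r N).Monic ∧ (P1r N).natDegree = N ∧
      (P2r N).Monic ∧ (P2r N).natDegree = N)
    (hbl : ∀ N M, pairingL γ (P1l N) (P2l M) = if N = M then hl N else 0)
    (hbr : ∀ N M, pairingR γ (P2r N) (P1r M) = if N = M then hr N else 0)
    (hunit : ∀ N, IsUnit (hl N) ∧ IsUnit (hr N))
    (hrec1 : ∀ N, P1r (N + 1) - X * P1r N
      = (P2l N).reflect N * C ((P1r (N + 1)).eval 0))
    (hrec2 : ∀ N, (P2l (N + 1)).reflect (N + 1) - (P2l N).reflect N
      = X * P1r N * C (((P2l (N + 1)).eval 0)ᵀ))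
    (N : ℕ) :
    (hr N)⁻¹ * hr (N + 1)
        = 1 - ((P2l (N + 1)).eval 0)ᵀ * (P1r (N + 1)).eval 0 ∧
      hl (N + 1) * (hl N)⁻¹
        = 1 - (P1l (N + 1)).eval 0 * ((P2r (N + 1)).eval 0)ᵀ := by
  have hm1l : ∀ K, (P1l K).Monic ∧ (P1l K).natDegree = K :=
    fun K => ⟨(hmon K).1, (hmon K).2.1⟩
  have hm2l : ∀ K, (P2l K).Monic ∧ (P2l K).natDegree = K :=
    fun K => ⟨(hmon K).2.2.1, (hmon K).2.2.2.1⟩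
  have hm1r : ∀ K, (P1r K).Monic ∧ (P1r K).natDegree = K :=
    fun K => ⟨(hmon K).2.2.2.2.1, (hmon K).2.2.2.2.2.1⟩
  have hm2r : ∀ K, (P2r K).Monic ∧ (P2r K).natDegree = K :=
    fun K => ⟨(hmon K).2.2.2.2.2.2.1, (hmon K).2.2.2.2.2.2.2⟩
  have hrunit : ∀ K, IsUnit (hr K) := fun K => (hunit K).2
  have hrec2' : ∀ K, (P2l (K+1)).reflect (K+1)
      = (P2l K).reflect K + X * P1r K * C (((P2l (K+1)).coeff 0)ᵀ) := by
    intro K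
    have h := hrec2 K
    rw [sub_eq_iff_eq_add, ← Polynomial.coeff_zero_eq_eval_zero] at h
    exact h.trans (add_comm _ _)
  have hrec1' : P1r (N+1)
      = X * P1r N + (P2l N).reflect N * C ((P1r (N+1)).coeff 0) := by
    have h := hrec1 N
    rw [sub_eq_iff_eq_add, ← Polynomial.coeff_zero_eq_eval_zero] at h
    exact h.trans (add_comm _ _)
  have pHL := p_eq_hl γ P1l P2l P1r P2r hl hr hm1l hm2l hm1r hm2r hbl hbr hrunit hrec2'
  have hdegQN : ((P2l N).reflect N).natDegree ≤ N :=
    reflect_natDegree_le _ _ (le_of_eq (hm2l N).2)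
  -- the first moment of X * P1r N
  have w : pairingR γ (C 1) (X * P1r N) = -(hl N * (P1r (N+1)).coeff 0) := by
    have hXP : X * P1r N
        = P1r (N+1) - (P2l N).reflect N * C ((P1r (N+1)).coeff 0) :=
      eq_sub_iff_add_eq.mpr hrec1'.symm
    rw [hXP, pR_sub_right, pR_mulC_right,
      E2 γ P1r P2r hr hm2r hbr (N+1) (C 1)
        (by simp [Polynomial.natDegree_C]) (N+1) le_rfl,
      pHL N, Polynomial.coeff_C, if_neg (Nat.succ_ne_zero N),
      Matrix.transpose_zero, zero_mul, zero_sub]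
  -- the main right-pairing recursion for hr
  have mainR : hr (N+1)
      = hr N - ((P2r (N+1)).coeff 0)ᵀ * (hl N * (P1r (N+1)).coeff 0) := by
    have h0 : hr (N+1) = pairingR γ (P2r (N+1)) (P1r (N+1)) := by
      rw [hbr (N+1) (N+1), if_pos rfl]
    rw [h0]
    conv_lhs => rw [hrec1']
    rw [pR_add_right, pR_mulC_right]
    have t1 : pairingR γ (P2r (N+1)) ((P2l N).reflect N) = 0 := by
      rw [E1 γ P1r P2r hr hm1r hbr (N+1) _ (hdegQN.trans (Nat.le_succ N)) (N+1) le_rfl,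
        Polynomial.coeff_eq_zero_of_natDegree_lt (by omega), mul_zero]
    have hsplit : P2r (N+1)
        = X * (P2r (N+1)).divX + C ((P2r (N+1)).coeff 0) :=
      (Polynomial.X_mul_divX_add _).symm
    have hdivXdeg : ((P2r (N+1)).divX).natDegree ≤ N := by
      rw [Polynomial.natDegree_le_iff_coeff_eq_zero]
      intro m hm
      rw [Polynomial.coeff_divX]
      exact Polynomial.coeff_eq_zero_of_natDegree_lt (by rw [(hm2r (N+1)).2]; omega)
    have hdivXtop : ((P2r (N+1)).divX).coeff N = 1 := by
      rw [Polynomial.coeff_divX]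
      have := (hm2r (N+1)).1.coeff_natDegree
      rwa [(hm2r (N+1)).2] at this
    have t2 : pairingR γ (P2r (N+1)) (X * P1r N)
        = hr N + ((P2r (N+1)).coeff 0)ᵀ * pairingR γ (C 1) (X * P1r N) := by
      conv_lhs => rw [hsplit]
      rw [pR_add_left, pR_XX,
        E2 γ P1r P2r hr hm2r hbr N ((P2r (N+1)).divX) hdivXdeg N le_rfl, hdivXtop,
        Matrix.transpose_one, one_mul]
      congr 1
      have hc : (C ((P2r (N+1)).coeff 0) : Polynomial (Matrix (Fin n) (Fin n) ℂ))
          = C 1 * C ((P2r (N+1)).coeff 0) := by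
        rw [← Polynomial.C_mul, one_mul]
      rw [hc, pR_mulC_left]
    rw [t1, t2, zero_mul, add_zero, w, mul_neg, ← sub_eq_add_neg]
  -- the recursion for hl
  have pRec : hl (N+1)
      = hl N - hl N * (P1r (N+1)).coeff 0 * ((P2l (N+1)).coeff 0)ᵀ := by
    rw [← pHL (N+1), hrec2' N, pR_add_right, pR_mulC_right, pHL N, w,
      neg_mul, ← sub_eq_add_neg]
  have hsym : ((P2l (N+1)).coeff 0)ᵀ = (P2l (N+1)).coeff 0 :=
    symE γ P2l P1r P2r hr hm2l hm1r hbr hrunit hrec2' N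
  -- identity I1
  have I1 : ((P2r (N+1)).coeff 0)ᵀ * hl (N+1) = hr (N+1) * (P2l (N+1)).coeff 0 := by
    have s := swap1 γ (N+1) (P2r (N+1)) (P2l (N+1))
      (le_of_eq (hm2r (N+1)).2) (le_of_eq (hm2l (N+1)).2)
    rw [sym1 γ P1l P2l P1r P2r hl hr hm1l hm2l hm1r hm2r hbl hbr hrunit hrec2'
      (N+1)] at s
    rw [E1 γ P1r P2r hr hm1r hbr (N+1) _
      (reflect_natDegree_le _ _ (le_of_eq (hm2l (N+1)).2)) (N+1) le_rfl] at s
    rw [reflect_coeff_le _ _ (le_refl (N+1)), Nat.sub_self] at s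
    rw [E3 γ P1l P2l hl hm1l hbl (N+1) _
      (reflect_natDegree_le _ _ ((trp_natDegree_le _).trans
        (le_of_eq (hm2r (N+1)).2))) (N+1) le_rfl] at s
    rw [reflect_coeff_le _ _ (le_refl (N+1)), Nat.sub_self, trp_coeff] at s
    exact s.symm
  -- identity I4
  have I4 : hl (N+1) * (P1r (N+1)).coeff 0 = (P1l (N+1)).coeff 0 * hr (N+1) := by
    have s := swap2 γ (N+1) (P1l (N+1)) (P1r (N+1))
      (le_of_eq (hm1l (N+1)).2) (le_of_eq (hm1r (N+1)).2)
    rw [E4 γ P1l P2l hl hm2l hbl (N+1) _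
      (reflect_natDegree_le _ _ ((trp_natDegree_le _).trans
        (le_of_eq (hm1r (N+1)).2))) (N+1) le_rfl] at s
    rw [reflect_coeff_le _ _ (le_refl (N+1)), Nat.sub_self, trp_coeff,
      Matrix.transpose_transpose] at s
    rw [E2 γ P1r P2r hr hm2r hbr (N+1) _
      (reflect_natDegree_le _ _ ((trp_natDegree_le _).trans
        (le_of_eq (hm1l (N+1)).2))) (N+1) le_rfl] at s
    rw [reflect_coeff_le _ _ (le_refl (N+1)), Nat.sub_self, trp_coeff,
      Matrix.transpose_transpose] at s
    exact s
  -- shifted I1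
  have i1N : ((P2r (N+1)).coeff 0)ᵀ * hl N = hr N * (P2l (N+1)).coeff 0 := by
    have h := I1
    rw [pRec, mainR, hsym, mul_sub, sub_mul] at h
    have hx : ((P2r (N+1)).coeff 0)ᵀ * (hl N * (P1r (N+1)).coeff 0 * (P2l (N+1)).coeff 0)
        = ((P2r (N+1)).coeff 0)ᵀ * (hl N * (P1r (N+1)).coeff 0) * (P2l (N+1)).coeff 0 :=
      (mul_assoc _ _ _).symm
    rw [hx] at h
    have h2 := congrArg
      (fun x => x + ((P2r (N+1)).coeff 0)ᵀ * (hl N * (P1r (N+1)).coeff 0)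
        * (P2l (N+1)).coeff 0) h
    simpa [sub_add_cancel] using h2
  have hrRel : hr (N+1)
      = hr N - hr N * (P2l (N+1)).coeff 0 * (P1r (N+1)).coeff 0 := by
    rw [mainR, ← mul_assoc, i1N]
  simp only [← Polynomial.coeff_zero_eq_eval_zero]
  constructor
  · -- first identity
    have hdet : IsUnit (hr N).det := (Matrix.isUnit_iff_isUnit_det _).mp (hunit N).2
    rw [hsym]
    have hfac : hr N - hr N * (P2l (N+1)).coeff 0 * (P1r (N+1)).coeff 0
        = hr N * (1 - (P2l (N+1)).coeff 0 * (P1r (N+1)).coeff 0) := by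
      rw [mul_sub, mul_one, mul_assoc]
    rw [hrRel, hfac, ← mul_assoc, Matrix.nonsing_inv_mul _ hdet, one_mul]
  · -- second identity
    have hdetl : IsUnit (hl N).det := (Matrix.isUnit_iff_isUnit_det _).mp (hunit N).1
    refine (hunit (N+1)).1.mul_right_cancel ?_
    have hlrel : hl (N+1)
        = hl N * (1 - (P1r (N+1)).coeff 0 * (P2l (N+1)).coeff 0) := by
      rw [pRec, hsym, mul_sub, mul_one, mul_assoc]
    calc hl (N+1) * (hl N)⁻¹ * hl (N+1)
        = hl (N+1) * ((hl N)⁻¹ * (hl N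
            * (1 - (P1r (N+1)).coeff 0 * (P2l (N+1)).coeff 0))) := by
          rw [← hlrel, mul_assoc]
      _ = hl (N+1) * (1 - (P1r (N+1)).coeff 0 * (P2l (N+1)).coeff 0) := by
          rw [← mul_assoc ((hl N)⁻¹), Matrix.nonsing_inv_mul _ hdetl, one_mul]
      _ = hl (N+1) - hl (N+1) * (P1r (N+1)).coeff 0 * (P2l (N+1)).coeff 0 := by
          rw [mul_sub, mul_one, mul_assoc]
      _ = hl (N+1) - (P1l (N+1)).coeff 0 * (hr (N+1) * (P2l (N+1)).coeff 0) := by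
          rw [I4, mul_assoc]
      _ = hl (N+1) - (P1l (N+1)).coeff 0 * (((P2r (N+1)).coeff 0)ᵀ * hl (N+1)) := by
          rw [I1]
      _ = (1 - (P1l (N+1)).coeff 0 * ((P2r (N+1)).coeff 0)ᵀ) * hl (N+1) := by
          rw [sub_mul, one_mul, mul_assoc]
end

section
/- Let x^l_k, y^r_k, x^r_k, y^l_k : ℝ → M_n(ℂ) be differentiable matrix-valued functions. Define, for z ≠ 0, the 2n×2n block matrices 𝓛^l_k := [[zI, x^l_{k+1}],[z y^r_{k+1}, I]] and 𝓜^l_k := [[z^{-1}I - I - x^l_{k+1} y^r_k, x^l_{k+1} - z^{-1} x^l_k],[z y^r_k - y^r_{k+1}, y^r_{k+1} x^l_k + I - zI]]. Then the semidiscrete zero-curvature equation ∂_τ 𝓛^l_k = 𝓜^l_{k+1} 𝓛^l_k - 𝓛^l_k 𝓜^l_k holds for all k and all z ≠ 0 if and only if the non-Abelian discrete NLS system holds: ∂_τ x^l_k = x^l_{k+1} - 2x^l_k + x^l_{k-1} - x^l_{k+1} y^r_k x^l_k - x^l_k y^r_k x^l_{k-1} and ∂_τ y^r_k = -y^r_{k+1}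 + 2y^r_k - y^r_{k-1} + y^r_{k+1} x^l_k y^r_k + y^r_k x^l_k y^r_{k-1}. -/
open Matrix

/-- Left Lax block matrix `𝓛ˡ_k = [[zI, xˡ_{k+1}],[z yʳ_{k+1}, I]]`. -/
noncomputable def LaxL {n : ℕ} (xl yr : ℤ → ℝ → Matrix (Fin n) (Fin n) ℂ)
    (k : ℤ) (τ : ℝ) (z : ℂ) : Matrix (Fin 2) (Fin 2) (Matrix (Fin n) (Fin n) ℂ) :=
  !![z • 1, xl (k + 1) τ; z • yr (k + 1) τ, 1]

/-- Left zero-curvature block matrix `𝓜ˡ_k`. -/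
noncomputable def MmatL {n : ℕ} (xl yr : ℤ → ℝ → Matrix (Fin n) (Fin n) ℂ)
    (k : ℤ) (τ : ℝ) (z : ℂ) : Matrix (Fin 2) (Fin 2) (Matrix (Fin n) (Fin n) ℂ) :=
  !![z⁻¹ • 1 - 1 - xl (k + 1) τ * yr k τ, xl (k + 1) τ - z⁻¹ • xl k τ;
     z • yr k τ - yr (k + 1) τ, yr (k + 1) τ * xl k τ + 1 - z • 1]

/-- Purely algebraic form of the commutator computation. -/
lemma dNLS_comm_key {R : Type*} [Ring R] [Algebra ℂ R]
    (a0 a1 a2 b0 b1 b2 : R) (z : ℂ) (hz : z ≠ 0) :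
    (!![z⁻¹ • 1 - 1 - a2 * b1, a2 - z⁻¹ • a1;
        z • b1 - b2, b2 * a1 + 1 - z • 1] : Matrix (Fin 2) (Fin 2) R)
        * !![z • 1, a1; z • b1, 1]
      - !![z • 1, a1; z • b1, 1]
        * !![z⁻¹ • 1 - 1 - a1 * b0, a1 - z⁻¹ • a0;
             z • b0 - b1, b1 * a0 + 1 - z • 1]
      = !![0, a2 - 2 • a1 + a0 - a2 * b1 * a1 - a1 * b1 * a0;
           z • (-b2 + 2 • b1 - b0 + b2 * a1 * b1 + b1 * a1 * b0), 0] := by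
  rw [Matrix.mul_fin_two, Matrix.mul_fin_two, ← Matrix.ext_iff]
  simp only [Fin.forall_fin_two, Matrix.sub_apply, Matrix.cons_val_zero,
    Matrix.cons_val_one, Matrix.head_cons, Matrix.of_apply, Matrix.cons_val',
    Matrix.empty_val', Matrix.cons_val_fin_one, Matrix.head_fin_const]
  refine ⟨⟨?_, ?_⟩, ?_, ?_⟩ <;>
  · simp only [sub_mul, mul_sub, add_mul, mul_add, smul_mul_assoc, mul_smul_comm,
      smul_smul, inv_mul_cancel₀ hz, mul_inv_cancel₀ hz, one_smul, one_mul, mul_one,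
      two_smul, smul_add, smul_sub, smul_neg, mul_assoc]
    abel

/-- The commutator `𝓜ˡ_{k+1} 𝓛ˡ_k - 𝓛ˡ_k 𝓜ˡ_k` in closed form. -/
lemma dNLS_comm {n : ℕ} (xl yr : ℤ → ℝ → Matrix (Fin n) (Fin n) ℂ)
    (k : ℤ) (τ : ℝ) (z : ℂ) (hz : z ≠ 0) :
    MmatL xl yr (k + 1) τ z * LaxL xl yr k τ z - LaxL xl yr k τ z * MmatL xl yr k τ z
      = !![0, xl (k + 1 + 1) τ - 2 • xl (k + 1) τ + xl k τ
              - xl (k + 1 + 1) τ * yr (k + 1) τ * xl (k + 1) τ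
              - xl (k + 1) τ * yr (k + 1) τ * xl k τ;
           z • (-yr (k + 1 + 1) τ + 2 • yr (k + 1) τ - yr k τ
              + yr (k + 1 + 1) τ * xl (k + 1) τ * yr (k + 1) τ
              + yr (k + 1) τ * xl (k + 1) τ * yr k τ), 0] := by
  unfold MmatL LaxL
  exact dNLS_comm_key (xl k τ) (xl (k + 1) τ) (xl (k + 1 + 1) τ)
    (yr k τ) (yr (k + 1) τ) (yr (k + 1 + 1) τ) z hz

/-- The left semidiscrete zero-curvature equation
`∂_τ 𝓛ˡ_k = 𝓜ˡ_{k+1} 𝓛ˡ_k - 𝓛ˡ_k 𝓜ˡ_k` for all `k` and all `z ≠ 0` is equivalent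
to the (left) non-Abelian discrete NLS system. -/
theorem nonabelian_dNLS_left_zero_curvature {n : ℕ}
    (xl yr xl' yr' : ℤ → ℝ → Matrix (Fin n) (Fin n) ℂ)
    (hxl : ∀ (k : ℤ) (τ : ℝ) (i j : Fin n),
      HasDerivAt (fun t => xl k t i j) (xl' k τ i j) τ)
    (hyr : ∀ (k : ℤ) (τ : ℝ) (i j : Fin n),
      HasDerivAt (fun t => yr k t i j) (yr' k τ i j) τ) :
    (∀ (k : ℤ) (τ : ℝ) (z : ℂ), z ≠ 0 →
        (!![0, xl' (k + 1) τ; z • yr' (k + 1) τ, 0] :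
            Matrix (Fin 2) (Fin 2) (Matrix (Fin n) (Fin n) ℂ))
          = MmatL xl yr (k + 1) τ z * LaxL xl yr k τ z
              - LaxL xl yr k τ z * MmatL xl yr k τ z)
      ↔ (∀ (k : ℤ) (τ : ℝ),
          xl' k τ = xl (k + 1) τ - 2 • xl k τ + xl (k - 1) τ
              - xl (k + 1) τ * yr k τ * xl k τ - xl k τ * yr k τ * xl (k - 1) τ ∧
          yr' k τ = -yr (k + 1) τ + 2 • yr k τ - yr (k - 1) τ
              + yr (k + 1) τ * xl k τ * yr k τ + yr k τ * xl k τ * yr (k - 1) τ) := by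
  constructor
  · intro h k τ
    have H := h (k - 1) τ 1 one_ne_zero
    rw [dNLS_comm xl yr (k - 1) τ 1 one_ne_zero] at H
    have e1 : k - 1 + 1 = k := by ring
    rw [e1] at H
    constructor
    · have := Matrix.ext_iff.2 H 0 1
      simpa using this
    · have := Matrix.ext_iff.2 H 1 0
      simpa using this
  · intro h k τ z hz
    rw [dNLS_comm xl yr k τ z hz]
    have h1 := (h (k + 1) τ).1
    have h2 := (h (k + 1) τ).2
    have e1 : k + 1 - 1 = k := by ring
    rw [e1] at h1 h2
    rw [h1, h2]
end

section
/- Let x^r_k, y^l_k : ℝ → M_n(ℂ) be differentiable. Define 𝓛^r_k := [[zI, z y^l_{k+1}],[x^r_{k+1}, I]] and 𝓜^r_k := [[z^{-1}I - I - y^l_k x^r_{k+1}, z y^l_k - y^l_{k+1}],[x^r_{k+1} - z^{-1} x^r_k, x^r_k y^l_{k+1} - zI + I]]. Then the right semidiscrete zero-curvature equation ∂_τ 𝓛^r_k = 𝓛^r_k 𝓜^r_{k+1} - 𝓜^r_k 𝓛^r_k holds for all k and all z ≠ 0 if and only if ∂_τ x^r_k = x^r_{k+1} - 2x^r_k + x^r_{k-1}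 - x^r_{k-1} y^l_k x^r_k - x^r_k y^l_k x^r_{k+1} and ∂_τ y^l_k = -y^l_{k+1} + 2y^l_k - y^l_{k-1} + y^l_{k-1} x^r_k y^l_k + y^l_k x^r_k y^l_{k+1}. -/
open Matrix

/-- Right Lax block matrix `𝓛ʳ_k = [[zI, z yˡ_{k+1}],[xʳ_{k+1}, I]]`. -/
noncomputable def LaxR {n : ℕ} (xr yl : ℤ → ℝ → Matrix (Fin n) (Fin n) ℂ)
    (k : ℤ) (τ : ℝ) (z : ℂ) : Matrix (Fin 2) (Fin 2) (Matrix (Fin n) (Fin n) ℂ) :=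
  !![z • 1, z • yl (k + 1) τ; xr (k + 1) τ, 1]

/-- Right zero-curvature block matrix `𝓜ʳ_k`. -/
noncomputable def MmatR {n : ℕ} (xr yl : ℤ → ℝ → Matrix (Fin n) (Fin n) ℂ)
    (k : ℤ) (τ : ℝ) (z : ℂ) : Matrix (Fin 2) (Fin 2) (Matrix (Fin n) (Fin n) ℂ) :=
  !![z⁻¹ • 1 - 1 - yl k τ * xr (k + 1) τ, z • yl k τ - yl (k + 1) τ;
     xr (k + 1) τ - z⁻¹ • xr k τ, xr k τ * yl (k + 1) τ - z • 1 + 1]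

private lemma sub_fin_two'' {α : Type*} [AddGroup α] (a b c d e f g h : α) :
    !![a,b;c,d] - !![e,f;g,h] = !![a-e,b-f;c-g,d-h] := by
  ext i j; fin_cases i <;> fin_cases j <;> simp

private lemma fin_two_eq' {α : Type*} (a b c d e f g h : α)
    (h1 : a = e) (h2 : b = f) (h3 : c = g) (h4 : d = h) :
    !![a,b;c,d] = !![e,f;g,h] := by rw [h1,h2,h3,h4]

/-- The right semidiscrete zero-curvature equation
`∂_τ 𝓛ʳ_k = 𝓛ʳ_k 𝓜ʳ_{k+1} - 𝓜ʳ_k 𝓛ʳ_k` for all `k` and all `z ≠ 0` is equivalent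
to the (right) non-Abelian discrete NLS system. -/
theorem nonabelian_dNLS_right_zero_curvature {n : ℕ}
    (xr yl xr' yl' : ℤ → ℝ → Matrix (Fin n) (Fin n) ℂ)
    (hxr : ∀ (k : ℤ) (τ : ℝ) (i j : Fin n),
      HasDerivAt (fun t => xr k t i j) (xr' k τ i j) τ)
    (hyl : ∀ (k : ℤ) (τ : ℝ) (i j : Fin n),
      HasDerivAt (fun t => yl k t i j) (yl' k τ i j) τ) :
    (∀ (k : ℤ) (τ : ℝ) (z : ℂ), z ≠ 0 →
        (!![0, z • yl' (k + 1) τ; xr' (k + 1) τ, 0] :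
            Matrix (Fin 2) (Fin 2) (Matrix (Fin n) (Fin n) ℂ))
          = LaxR xr yl k τ z * MmatR xr yl (k + 1) τ z
              - MmatR xr yl k τ z * LaxR xr yl k τ z)
      ↔ (∀ (k : ℤ) (τ : ℝ),
          xr' k τ = xr (k + 1) τ - 2 • xr k τ + xr (k - 1) τ
              - xr (k - 1) τ * yl k τ * xr k τ - xr k τ * yl k τ * xr (k + 1) τ ∧
          yl' k τ = -yl (k + 1) τ + 2 • yl k τ - yl (k - 1) τ
              + yl (k - 1) τ * xr k τ * yl k τ + yl k τ * xr k τ * yl (k + 1) τ) := by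
  constructor
  · intro h k τ
    have h1 := h (k - 1) τ 1 one_ne_zero
    have e1 : k - 1 + 1 = k := by ring
    simp only [LaxR, MmatR, Matrix.mul_fin_two, one_smul, inv_one, e1] at h1
    have hx := congrFun (congrFun h1 1) 0
    have hy := congrFun (congrFun h1 0) 1
    simp only [Matrix.sub_apply, Matrix.of_apply, Matrix.cons_val', Matrix.cons_val_zero,
      Matrix.cons_val_one, Matrix.head_cons, Matrix.head_fin_const, Matrix.cons_val_fin_one,
      Matrix.empty_val'] at hx hy
    constructor
    · rw [hx]; noncomm_ring
    · rw [hy]; noncomm_ring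
  · intro h k τ z hz
    obtain ⟨hx1, hy1⟩ := h (k + 1) τ
    have e1 : k + 1 - 1 = k := by ring
    rw [e1] at hx1 hy1
    have hzz : z * z⁻¹ = 1 := mul_inv_cancel₀ hz
    have hzz' : z⁻¹ * z = 1 := inv_mul_cancel₀ hz
    rw [hx1, hy1]
    simp only [LaxR, MmatR, Matrix.mul_fin_two, sub_fin_two'']
    apply fin_two_eq' <;>
      · simp only [Matrix.mul_sub, Matrix.sub_mul, Matrix.mul_add, Matrix.add_mul,
          smul_mul_assoc, mul_smul_comm, smul_smul, smul_sub, smul_add, smul_neg,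
          mul_one, one_mul, hzz, hzz', one_smul, mul_assoc]
        module
end

section
/- Suppose Z₁(t), Z₂(t) are differentiable semi-infinite block matrices (Z₁ block-upper triangular, Z₂ block-lower triangular with identity blocks on the diagonal, both invertible) with T(t) := Z₂ Z₁⁻¹ satisfying ∂_t T = T Λ⁻¹, where Λ is the block shift. If additionally one postulates ∂_t Z₁ = Z₁ A with A block-upper triangular and ∂_t Z₂ = Z₂ B with B strictly block-lower triangular, then necessarily A = -(R)₊ and B = (R)₋, where R := Z₁⁻¹ Λ⁻¹ Z₁, (·)₊ denotes the block-upper triangular part (including diagonal) and (·)₋ the strictly block-lower triangular part. -/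
open scoped BigOperators

/-- `T = Z₂ Z₁⁻¹`: entry `(i,j)` of `Z₂ W₁`, a finite sum by triangularity
(`Z₂` block-lower, `W₁ = Z₁⁻¹` block-upper). -/
noncomputable def blockT {n : ℕ} (Z₂ W₁ : ℕ → ℕ → Matrix (Fin n) (Fin n) ℂ)
    (i j : ℕ) : Matrix (Fin n) (Fin n) ℂ :=
  ∑ k ∈ Finset.range (min i j + 1), Z₂ i k * W₁ k j

/-- `R = Z₁⁻¹ Λ⁻¹ Z₁`: entry `(i,j)` of `W₁ Λ⁻¹ Z₁`, where `Λ⁻¹` is the block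
down-shift, a finite sum by triangularity. -/
noncomputable def blockR {n : ℕ} (W₁ Z₁ : ℕ → ℕ → Matrix (Fin n) (Fin n) ℂ)
    (i j : ℕ) : Matrix (Fin n) (Fin n) ℂ :=
  ∑ l ∈ Finset.range (j + 1), W₁ i (l + 1) * Z₁ l j

section helpers

variable {n : ℕ} (Z₁ Z₂ W₁ : ℕ → ℕ → Matrix (Fin n) (Fin n) ℂ)

lemma blockT_ext (hW₁up : ∀ i j, j < i → W₁ i j = 0) (i k : ℕ) :
    blockT Z₂ W₁ i k = ∑ m ∈ Finset.range (i + 1), Z₂ i m * W₁ m k := by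
  unfold blockT
  apply Finset.sum_subset
  · exact Finset.range_subset_range.2 (by omega)
  · intro m hm hmn
    simp only [Finset.mem_range] at hm hmn
    rw [hW₁up m k (by omega), mul_zero]

lemma inner_inv (hW₁up : ∀ i j, j < i → W₁ i j = 0)
    (hinv₂ : ∀ i j, (∑ k ∈ Finset.Icc i j, W₁ i k * Z₁ k j)
      = if i = j then 1 else 0) (m j : ℕ) :
    (∑ k ∈ Finset.range (j + 1), W₁ m k * Z₁ k j) = if m = j then 1 else 0 := by
  by_cases h : m ≤ j
  · rw [← hinv₂ m j]
    symm
    apply Finset.sum_subset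
    · intro k hk
      simp only [Finset.mem_Icc] at hk
      exact Finset.mem_range.2 (by omega)
    · intro k hk hkn
      simp only [Finset.mem_range] at hk
      simp only [Finset.mem_Icc] at hkn
      rw [hW₁up m k (by omega), zero_mul]
  · rw [if_neg (by omega)]
    apply Finset.sum_eq_zero
    intro k hk
    simp only [Finset.mem_range] at hk
    rw [hW₁up m k (by omega), zero_mul]

lemma TZ1_eq (hZ₂low : ∀ i j, i < j → Z₂ i j = 0)
    (hW₁up : ∀ i j, j < i → W₁ i j = 0)
    (hinv₂ : ∀ i j, (∑ k ∈ Finset.Icc i j, W₁ i k * Z₁ k j)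
      = if i = j then 1 else 0) (i j : ℕ) :
    (∑ k ∈ Finset.range (j + 1), blockT Z₂ W₁ i k * Z₁ k j) = Z₂ i j := by
  have : ∀ k, blockT Z₂ W₁ i k = ∑ m ∈ Finset.range (i + 1), Z₂ i m * W₁ m k :=
    fun k => blockT_ext Z₂ W₁ hW₁up i k
  simp only [this, Finset.sum_mul, mul_assoc]
  rw [Finset.sum_comm]
  simp only [← Finset.mul_sum]
  rw [Finset.sum_congr rfl (fun m _ => by
    rw [inner_inv Z₁ W₁ hW₁up hinv₂ m j])]
  simp only [mul_ite, mul_one, mul_zero, Finset.sum_ite_eq', Finset.mem_range]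
  by_cases h : j < i + 1
  · rw [if_pos h]
  · rw [if_neg h, hZ₂low i j (by omega)]

end helpers

/-- Sato-type equations for the right dressing: if `T = Z₂ Z₁⁻¹` satisfies
`∂_t T = T Λ⁻¹`, and `∂_t Z₁ = Z₁ A` with `A` block-upper triangular,
`∂_t Z₂ = Z₂ B` with `B` strictly block-lower triangular, then necessarily
`A = -(R)₊` and `B = (R)₋` where `R = Z₁⁻¹ Λ⁻¹ Z₁`. -/
theorem sato_equations_right_dressing {n : ℕ}
    (Z₁ Z₂ W₁ A B : ℝ → ℕ → ℕ → Matrix (Fin n) (Fin n) ℂ)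
    -- triangularity and normalization
    (hZ₁up : ∀ t i j, j < i → Z₁ t i j = 0)
    (hZ₁diagInv : ∀ t i, IsUnit (Z₁ t i i))
    (hZ₂low : ∀ t i j, i < j → Z₂ t i j = 0)
    (hZ₂diag : ∀ t i, Z₂ t i i = 1)
    (hW₁up : ∀ t i j, j < i → W₁ t i j = 0)
    -- `W₁` is the two-sided inverse of `Z₁` (entrywise finite sums)
    (hinv₁ : ∀ t i j, (∑ k ∈ Finset.Icc i j, Z₁ t i k * W₁ t k j)
      = if i = j then 1 else 0)
    (hinv₂ : ∀ t i j, (∑ k ∈ Finset.Icc i j, W₁ t i k * Z₁ t k j)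
      = if i = j then 1 else 0)
    -- `∂_t T = T Λ⁻¹`, entrywise
    (hT : ∀ (t : ℝ) (i j : ℕ) (a b : Fin n),
      HasDerivAt (fun s => blockT (Z₂ s) (W₁ s) i j a b)
        (blockT (Z₂ t) (W₁ t) i (j + 1) a b) t)
    -- triangularity of `A` and `B`
    (hAup : ∀ t i j, j < i → A t i j = 0)
    (hBlow : ∀ t i j, i ≤ j → B t i j = 0)
    -- `∂_t Z₁ = Z₁ A` and `∂_t Z₂ = Z₂ B`, entrywise finite sums
    (hZ₁' : ∀ (t : ℝ) (i j : ℕ) (a b : Fin n),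
      HasDerivAt (fun s => Z₁ s i j a b)
        ((∑ k ∈ Finset.Icc i j, Z₁ t i k * A t k j) a b) t)
    (hZ₂' : ∀ (t : ℝ) (i j : ℕ) (a b : Fin n),
      HasDerivAt (fun s => Z₂ s i j a b)
        ((∑ k ∈ Finset.range (i + 1), Z₂ t i k * B t k j) a b) t) :
    ∀ (t : ℝ) (i j : ℕ),
      A t i j = (if i ≤ j then -(blockR (W₁ t) (Z₁ t) i j) else 0) ∧
      B t i j = (if j < i then blockR (W₁ t) (Z₁ t) i j else 0) := by

  -- Step 1: differentiate T·Z₁ = Z₂ entrywise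
  have key : ∀ (t : ℝ) (i j : ℕ),
      (∑ k ∈ Finset.range (j + 1),
        (blockT (Z₂ t) (W₁ t) i (k + 1) * Z₁ t k j
          + blockT (Z₂ t) (W₁ t) i k * (∑ l ∈ Finset.Icc k j, Z₁ t k l * A t l j)))
      = ∑ k ∈ Finset.range (i + 1), Z₂ t i k * B t k j := by
    intro t i j
    ext a b
    have hsum : HasDerivAt
        (fun s => ∑ k ∈ Finset.range (j + 1), ∑ c,
          blockT (Z₂ s) (W₁ s) i k a c * Z₁ s k j c b)
        (∑ k ∈ Finset.range (j + 1), ∑ c,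
          (blockT (Z₂ t) (W₁ t) i (k + 1) a c * Z₁ t k j c b
            + blockT (Z₂ t) (W₁ t) i k a c
              * ((∑ l ∈ Finset.Icc k j, Z₁ t k l * A t l j) c b))) t := by
      apply HasDerivAt.fun_sum
      intro k _
      apply HasDerivAt.fun_sum
      intro c _
      exact (hT t i k a c).mul (hZ₁' t k j c b)
    have hfun : (fun s => ∑ k ∈ Finset.range (j + 1), ∑ c,
          blockT (Z₂ s) (W₁ s) i k a c * Z₁ s k j c b)
        = fun s => Z₂ s i j a b := by
      funext s
      rw [← TZ1_eq (Z₁ s) (Z₂ s) (W₁ s) (hZ₂low s) (hW₁up s) (hinv₂ s) i j]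
      simp [Matrix.sum_apply, Matrix.mul_apply]
    rw [hfun] at hsum
    have huniq := hsum.unique (hZ₂' t i j a b)
    simp only [Matrix.sum_apply, Matrix.add_apply, Matrix.mul_apply,
      Finset.sum_add_distrib] at huniq ⊢
    exact huniq
  -- Step 2: rearrange into Z₂ · (R + A - B) = 0
  have halg : ∀ (t : ℝ) (i j : ℕ),
      (∑ m ∈ Finset.range (max i j + 1),
        Z₂ t i m * (blockR (W₁ t) (Z₁ t) m j + A t m j - B t m j)) = 0 := by
    intro t i j
    have h := key t i j
    rw [Finset.sum_add_distrib] at h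
    -- first summand
    have h1 : (∑ k ∈ Finset.range (j + 1), blockT (Z₂ t) (W₁ t) i (k + 1) * Z₁ t k j)
        = ∑ m ∈ Finset.range (i + 1), Z₂ t i m * blockR (W₁ t) (Z₁ t) m j := by
      have hbt : ∀ k, blockT (Z₂ t) (W₁ t) i (k + 1)
          = ∑ m ∈ Finset.range (i + 1), Z₂ t i m * W₁ t m (k + 1) :=
        fun k => blockT_ext (Z₂ t) (W₁ t) (hW₁up t) i (k + 1)
      simp only [hbt, Finset.sum_mul, mul_assoc]
      rw [Finset.sum_comm]
      simp only [← Finset.mul_sum]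
      rfl
    -- second summand
    have h2 : (∑ k ∈ Finset.range (j + 1),
          blockT (Z₂ t) (W₁ t) i k * (∑ l ∈ Finset.Icc k j, Z₁ t k l * A t l j))
        = ∑ l ∈ Finset.range (j + 1), Z₂ t i l * A t l j := by
      have hic : ∀ k ∈ Finset.range (j + 1),
          (∑ l ∈ Finset.Icc k j, Z₁ t k l * A t l j)
            = ∑ l ∈ Finset.range (j + 1), Z₁ t k l * A t l j := by
        intro k hk
        simp only [Finset.mem_range] at hk
        apply Finset.sum_subset
        · intro l hl
          simp only [Finset.mem_Icc] at hl
          exact Finset.mem_range.2 (by omega)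
        · intro l hl hln
          simp only [Finset.mem_range] at hl
          simp only [Finset.mem_Icc] at hln
          rw [hZ₁up t k l (by omega), zero_mul]
      rw [Finset.sum_congr rfl (fun k hk => by rw [hic k hk])]
      simp only [Finset.mul_sum]
      rw [Finset.sum_comm]
      refine Finset.sum_congr rfl (fun l hl => ?_)
      simp only [Finset.mem_range] at hl
      simp only [← mul_assoc, ← Finset.sum_mul]
      have hres : (∑ k ∈ Finset.range (j + 1), blockT (Z₂ t) (W₁ t) i k * Z₁ t k l)
          = ∑ k ∈ Finset.range (l + 1), blockT (Z₂ t) (W₁ t) i k * Z₁ t k l := by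
        symm
        apply Finset.sum_subset
        · exact Finset.range_subset_range.2 (by omega)
        · intro k hk hkn
          simp only [Finset.mem_range] at hk hkn
          rw [hZ₁up t k l (by omega), mul_zero]
      rw [hres, TZ1_eq (Z₁ t) (Z₂ t) (W₁ t) (hZ₂low t) (hW₁up t) (hinv₂ t) i l]
    rw [h1, h2] at h
    -- extend all three sums to range (max i j + 1)
    have e1 : (∑ m ∈ Finset.range (i + 1), Z₂ t i m * blockR (W₁ t) (Z₁ t) m j)
        = ∑ m ∈ Finset.range (max i j + 1), Z₂ t i m * blockR (W₁ t) (Z₁ t) m j := by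
      apply Finset.sum_subset
      · exact Finset.range_subset_range.2 (by omega)
      · intro m hm hmn
        simp only [Finset.mem_range] at hm hmn
        rw [hZ₂low t i m (by omega), zero_mul]
    have e2 : (∑ l ∈ Finset.range (j + 1), Z₂ t i l * A t l j)
        = ∑ l ∈ Finset.range (max i j + 1), Z₂ t i l * A t l j := by
      apply Finset.sum_subset
      · exact Finset.range_subset_range.2 (by omega)
      · intro l hl hln
        simp only [Finset.mem_range] at hl hln
        rw [hAup t l j (by omega), mul_zero]
    have e3 : (∑ k ∈ Finset.range (i + 1), Z₂ t i k * B t k j)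
        = ∑ k ∈ Finset.range (max i j + 1), Z₂ t i k * B t k j := by
      apply Finset.sum_subset
      · exact Finset.range_subset_range.2 (by omega)
      · intro k hk hkn
        simp only [Finset.mem_range] at hk hkn
        rw [hZ₂low t i k (by omega), zero_mul]
    rw [e1, e2, e3] at h
    simp only [mul_sub, mul_add, Finset.sum_sub_distrib, Finset.sum_add_distrib]
    rw [h]
    abel
  -- Step 3: peel off the lower-unitriangular Z₂
  have hC : ∀ (t : ℝ) (i j : ℕ),
      blockR (W₁ t) (Z₁ t) i j + A t i j - B t i j = 0 := by
    intro t i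
    induction i using Nat.strong_induction_on with
    | _ i ih =>
      intro j
      have h := halg t i j
      rw [Finset.sum_eq_single i (fun m _ hne => by
          rcases lt_or_gt_of_ne hne with hlt | hgt
          · rw [ih m hlt j, mul_zero]
          · rw [hZ₂low t i m hgt, zero_mul])
        (fun hi => absurd (Finset.mem_range.2 (by omega)) hi)] at h
      rwa [hZ₂diag t i, one_mul] at h
  -- conclude
  intro t i j
  have h := hC t i j
  constructor
  · by_cases hij : i ≤ j
    · rw [if_pos hij]
      rw [hBlow t i j hij, sub_zero, add_comm, add_eq_zero_iff_eq_neg] at h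
      exact h
    · rw [if_neg hij]
      exact hAup t i j (by omega)
  · by_cases hij : j < i
    · rw [if_pos hij]
      rw [hAup t i j hij, add_zero, sub_eq_zero] at h
      exact h.symm
    · rw [if_neg hij]
      exact hBlow t i j (by omega)
end
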